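/- arXiv:1506.03945 — 7 statements merged into one kernel-verified Lean document; each statement's English description precedes it below -/
import Mathlib

section
/- There exists a unique pair (V, λ) with V : I → ℝ measurable satisfying ∫_I V² dσ < ∞ and λ ∈ ℝ, such that V(σ) = κ(σ) + Φ(V(σ)) − λ for almost every σ ∈ I and ∫_I V(σ)·S(σ) dσ = 0. Uniqueness means: if (V′, λ′) is another such pair then λ′ = λ and V′ = V almost everywhere on I. -/
/-!
Since `Φ` is a `J`-contraction, `x ↦ x - Φ x` is an increasing bijection of `ℝ` whose inverse `g`
is Lipschitz and increases with slope at least `1 / (1 + J)`. The equation `V = κ + Φ(V) - λ`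
forces `V = g (κ - λ)`, so the constraint reads `F λ := ∫_I g (κ - λ) S = 0`. As `S ≥ ω > 0`, the
function `F` is continuous and decreases at rate at least `∫_I S / (1 + J) > 0`, hence has exactly
one zero.
-/

open MeasureTheory Set

/-- The pair (V, λ) solves the non-local problem: V is measurable, square
integrable on I = [0, ℓ], V = κ + Φ(V) − λ a.e. on I, and ∫_I V·S dσ = 0. -/
def IsSolPair (Φ κ S : ℝ → ℝ) (ℓ : ℝ) (V : ℝ → ℝ) (lam : ℝ) : Prop :=
  Measurable V ∧
  IntegrableOn (fun σ => (V σ) ^ 2) (Icc 0 ℓ) ∧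
  (∀ᵐ σ ∂(volume.restrict (Icc (0:ℝ) ℓ)), V σ = κ σ + Φ (V σ) - lam) ∧
  ∫ σ in Icc (0:ℝ) ℓ, V σ * S σ = 0

open Filter
open scoped NNReal

namespace LipschitzWith

variable {K : ℝ≥0} {Φ : ℝ → ℝ}

lemma mul_sub_le_sub_sub_sub (hΦ : LipschitzWith K Φ) {x y : ℝ} (hxy : x ≤ y) :
    (1 - K) * (y - x) ≤ (y - Φ y) - (x - Φ x) := by
  have := (abs_le.mp (hΦ.dist_le_mul y x)).2
  rw [Real.dist_eq, abs_of_nonneg (sub_nonneg.mpr hxy)] at this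
  linear_combination this

lemma sub_sub_sub_le_mul_sub (hΦ : LipschitzWith K Φ) {x y : ℝ} (hxy : x ≤ y) :
    (y - Φ y) - (x - Φ x) ≤ (1 + K) * (y - x) := by
  have := (abs_le.mp (hΦ.dist_le_mul y x)).1
  rw [Real.dist_eq, abs_of_nonneg (sub_nonneg.mpr hxy)] at this
  linear_combination this

lemma strictMono_sub_self (hΦ : LipschitzWith K Φ) (hK : K < 1) :
    StrictMono fun x => x - Φ x := fun x y hxy => by
  have : 0 < (1 - (K : ℝ)) * (y - x) := mul_pos (by simpa using hK) (sub_pos.mpr hxy)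
  linarith [hΦ.mul_sub_le_sub_sub_sub hxy.le]

lemma surjective_sub_self (hΦ : LipschitzWith K Φ) (hK : K < 1) :
    Function.Surjective fun x => x - Φ x := fun c => by
  have hc : ContractingWith K fun x => c + Φ x :=
    ⟨hK, (LipschitzWith.const c).add hΦ |>.weaken (by simp)⟩
  exact ⟨_, sub_eq_of_eq_add hc.fixedPoint_isFixedPt.symm⟩

noncomputable def idSubOrderIso (hΦ : LipschitzWith K Φ) (hK : K < 1) : ℝ ≃o ℝ :=
  StrictMono.orderIsoOfSurjective _ (hΦ.strictMono_sub_self hK) (hΦ.surjective_sub_self hK)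

variable (hΦ : LipschitzWith K Φ) (hK : K < 1)

@[simp] lemma idSubOrderIso_apply (x : ℝ) : hΦ.idSubOrderIso hK x = x - Φ x := rfl

lemma idSubOrderIso_symm_eq_iff {c x : ℝ} : (hΦ.idSubOrderIso hK).symm c = x ↔ x = c + Φ x := by
  rw [OrderIso.symm_apply_eq, idSubOrderIso_apply, eq_sub_iff_add_eq, add_comm, eq_comm]

lemma lipschitzWith_idSubOrderIso_symm : LipschitzWith (1 - K)⁻¹ (hΦ.idSubOrderIso hK).symm := by
  have : AntilipschitzWith (1 - K)⁻¹ fun x => x - Φ x := by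
    simpa [sub_eq_add_neg] using AntilipschitzWith.id.add_lipschitzWith hΦ.neg (by simpa using hK)
  exact this.to_rightInverse (hΦ.idSubOrderIso hK).apply_symm_apply

lemma inv_mul_sub_le_idSubOrderIso_symm_sub {c c' : ℝ} (hcc' : c ≤ c') :
    (1 + K : ℝ)⁻¹ * (c' - c) ≤ (hΦ.idSubOrderIso hK).symm c' - (hΦ.idSubOrderIso hK).symm c := by
  set e := hΦ.idSubOrderIso hK
  have h := hΦ.sub_sub_sub_le_mul_sub (e.symm.monotone hcc')
  rw [← idSubOrderIso_apply hΦ hK, ← idSubOrderIso_apply hΦ hK, e.apply_symm_apply,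
    e.apply_symm_apply] at h
  rwa [inv_mul_le_iff₀ (by positivity)]

end LipschitzWith

lemma existsUnique_eq_zero_of_mul_sub_le_sub {F : ℝ → ℝ} {c : ℝ} (hF : Continuous F) (hc : 0 < c)
    (hFc : ∀ a b, a ≤ b → c * (b - a) ≤ F a - F b) : ∃! x, F x = 0 := by
  have hanti : StrictAnti F := fun a b hab => by
    nlinarith [hFc a b hab.le]
  have hbot : Tendsto F atBot atTop := by
    refine tendsto_atTop_mono' _ (eventually_le_atBot 0 |>.mono fun a ha => ?_)
      (tendsto_atTop_add_const_left _ (F 0)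
        (tendsto_id.atBot_mul_const_of_neg (neg_neg_iff_pos.2 hc)))
    rw [id]
    linarith [hFc a 0 ha]
  have htop : Tendsto F atTop atBot := by
    refine tendsto_atBot_mono' _ (eventually_ge_atTop 0 |>.mono fun b hb => ?_)
      (tendsto_atBot_add_const_left _ (F 0)
        (tendsto_id.const_mul_atTop_of_neg (neg_neg_iff_pos.2 hc)))
    rw [id]
    linarith [hFc 0 b hb]
  obtain ⟨x, hx⟩ := hF.surjective' hbot htop 0
  exact ⟨x, hx, fun y hy => hanti.injective (hy.trans hx.symm)⟩

section

variable {α E F : Type*} [MeasurableSpace α] {μ : Measure α} [IsFiniteMeasure μ]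
  [NormedAddCommGroup E] [NormedAddCommGroup F] {p : ENNReal}

lemma LipschitzWith.comp_memLp_of_isFiniteMeasure {K : ℝ≥0} {g : E → F}
    (hg : LipschitzWith K g) {f : α → E} (hf : MemLp f p μ) : MemLp (fun x => g (f x)) p μ := by
  have h := (hg.sub (LipschitzWith.const (g 0))).comp_memLp (by simp) hf
  convert h.add (memLp_const (g 0)) using 1
  ext x
  simp

end

section

variable {α : Type*} [MeasurableSpace α] {μ : Measure α} [IsFiniteMeasure μ]
  {g : ℝ → ℝ} {L : ℝ≥0} {κ S : α → ℝ}

lemma integrable_comp_sub_mul (hg : LipschitzWith L g) (hκ : Integrable κ μ) (hS : MemLp S ⊤ μ)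
    (lam : ℝ) : Integrable (fun x => g (κ x - lam) * S x) μ := by
  have hκ' := memLp_one_iff_integrable.2 (hκ.sub (integrable_const lam))
  exact (memLp_one_iff_integrable.1 (hg.comp_memLp_of_isFiniteMeasure hκ')).mul_of_top_left hS

variable (hg : LipschitzWith L g) (hκ : Integrable κ μ) (hS : MemLp S ⊤ μ)
include hg hκ hS

lemma integral_comp_sub_mul_sub_integral_comp_sub_mul (a b : ℝ) :
    ∫ x, g (κ x - a) * S x ∂μ - ∫ x, g (κ x - b) * S x ∂μ =
      ∫ x, (g (κ x - a) - g (κ x - b)) * S x ∂μ := by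
  rw [← integral_sub (integrable_comp_sub_mul hg hκ hS a) (integrable_comp_sub_mul hg hκ hS b)]
  simp only [sub_mul]

lemma lipschitzWith_integral_comp_sub_mul (hS0 : 0 ≤ᵐ[μ] S) :
    LipschitzWith (L * ∫ x, S x ∂μ).toNNReal fun lam => ∫ x, g (κ x - lam) * S x ∂μ := by
  refine LipschitzWith.of_dist_le' fun a b => ?_
  rw [Real.dist_eq, integral_comp_sub_mul_sub_integral_comp_sub_mul hg hκ hS, ← Real.norm_eq_abs,
    mul_right_comm, ← integral_const_mul]
  refine norm_integral_le_of_norm_le ((hS.integrable le_top).const_mul _) ?_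
  filter_upwards [hS0] with x hx
  rw [norm_mul, Real.norm_of_nonneg hx]
  gcongr
  rw [← dist_eq_norm, ← dist_sub_left (κ x) a b]
  exact hg.dist_le_mul _ _

lemma mul_sub_mul_integral_le_integral_comp_sub_mul_sub {m : ℝ}
    (hgm : ∀ c c', c ≤ c' → m * (c' - c) ≤ g c' - g c) (hS0 : 0 ≤ᵐ[μ] S) {a b : ℝ} (hab : a ≤ b) :
    m * (b - a) * ∫ x, S x ∂μ ≤ ∫ x, g (κ x - a) * S x ∂μ - ∫ x, g (κ x - b) * S x ∂μ := by
  rw [integral_comp_sub_mul_sub_integral_comp_sub_mul hg hκ hS, ← integral_const_mul]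
  refine integral_mono_ae ((hS.integrable le_top).const_mul _)
    ((integrable_comp_sub_mul hg hκ hS a).sub (integrable_comp_sub_mul hg hκ hS b) |>.congr
      (ae_of_all _ fun x => (sub_mul _ _ _).symm)) ?_
  filter_upwards [hS0] with x hx
  have := hgm (κ x - b) (κ x - a) (by linarith)
  rw [sub_sub_sub_cancel_left] at this
  exact mul_le_mul_of_nonneg_right this hx

theorem existsUnique_integral_comp_sub_mul_eq_zero {m : ℝ} (hm : 0 < m)
    (hgm : ∀ c c', c ≤ c' → m * (c' - c) ≤ g c' - g c) (hS0 : 0 ≤ᵐ[μ] S)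
    (hSpos : 0 < ∫ x, S x ∂μ) : ∃! lam, ∫ x, g (κ x - lam) * S x ∂μ = 0 :=
  existsUnique_eq_zero_of_mul_sub_le_sub
    (lipschitzWith_integral_comp_sub_mul hg hκ hS hS0).continuous (mul_pos hm hSpos)
    fun a b hab => by
      simpa only [mul_right_comm] using
        mul_sub_mul_integral_le_integral_comp_sub_mul_sub hg hκ hS hgm hS0 hab

end

section IsSolPair

variable {Φ κ S : ℝ → ℝ} {ℓ : ℝ} {K : ℝ≥0} (hΦ : LipschitzWith K Φ) (hK : K < 1)
include hΦ

lemma IsSolPair.ae_eq_idSubOrderIso_symm {V : ℝ → ℝ} {lam : ℝ} (h : IsSolPair Φ κ S ℓ V lam) :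
    V =ᵐ[volume.restrict (Icc 0 ℓ)] fun σ => (hΦ.idSubOrderIso hK).symm (κ σ - lam) := by
  filter_upwards [h.2.2.1] with σ hσ
  exact ((hΦ.idSubOrderIso_symm_eq_iff hK).2 (by linarith)).symm

lemma IsSolPair.integral_idSubOrderIso_symm_mul_eq_zero {V : ℝ → ℝ} {lam : ℝ}
    (h : IsSolPair Φ κ S ℓ V lam) :
    ∫ σ in Icc 0 ℓ, (hΦ.idSubOrderIso hK).symm (κ σ - lam) * S σ = 0 := by
  refine (integral_congr_ae ?_).trans h.2.2.2
  exact (h.ae_eq_idSubOrderIso_symm hΦ hK).symm.mul (ae_eq_refl S)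

lemma isSolPair_idSubOrderIso_symm (hκm : Measurable κ)
    (hκ : MemLp κ 2 (volume.restrict (Icc 0 ℓ))) {lam : ℝ}
    (h : ∫ σ in Icc 0 ℓ, (hΦ.idSubOrderIso hK).symm (κ σ - lam) * S σ = 0) :
    IsSolPair Φ κ S ℓ (fun σ => (hΦ.idSubOrderIso hK).symm (κ σ - lam)) lam := by
  have hlip := hΦ.lipschitzWith_idSubOrderIso_symm hK
  have hm : Measurable fun σ => (hΦ.idSubOrderIso hK).symm (κ σ - lam) :=
    hlip.continuous.measurable.comp (hκm.sub_const lam)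
  refine ⟨hm, ?_, ae_of_all _ fun σ => ?_, h⟩
  · exact (memLp_two_iff_integrable_sq hm.aestronglyMeasurable).1
      (hlip.comp_memLp_of_isFiniteMeasure (hκ.sub (memLp_const lam)))
  · have := (hΦ.idSubOrderIso_symm_eq_iff hK (c := κ σ - lam)).1 rfl
    linarith

end IsSolPair

theorem stmt1_general (Φ : ℝ → ℝ) (J : ℝ) (hJ1 : J < 1)
    (hΦlip : ∀ a b : ℝ, |Φ a - Φ b| ≤ J * |a - b|)
    (ℓ : ℝ) (hℓ : 0 < ℓ)
    (κ S : ℝ → ℝ) (hκm : Measurable κ)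
    (hκ2 : IntegrableOn (fun σ => (κ σ) ^ 2) (Icc 0 ℓ))
    (hSm : Measurable S)
    (ω MS : ℝ) (hω : 0 < ω)
    (hS : ∀ᵐ σ ∂(volume.restrict (Icc (0:ℝ) ℓ)), ω ≤ S σ ∧ S σ ≤ MS) :
    (∃ V : ℝ → ℝ, ∃ lam : ℝ, IsSolPair Φ κ S ℓ V lam) ∧
    (∀ V V' : ℝ → ℝ, ∀ lam lam' : ℝ,
      IsSolPair Φ κ S ℓ V lam → IsSolPair Φ κ S ℓ V' lam' →
      lam' = lam ∧ V' =ᵐ[volume.restrict (Icc (0:ℝ) ℓ)] V) := by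
  have hΦ : LipschitzWith J.toNNReal Φ := LipschitzWith.of_dist_le' hΦlip
  have hK : J.toNNReal < 1 := Real.toNNReal_lt_one.2 hJ1
  have hκ : MemLp κ 2 (volume.restrict (Icc 0 ℓ)) :=
    (memLp_two_iff_integrable_sq hκm.aestronglyMeasurable).2 hκ2
  have hS0 : 0 ≤ᵐ[volume.restrict (Icc 0 ℓ)] S := hS.mono fun σ hσ => hω.le.trans hσ.1
  have hSbdd : MemLp S ⊤ (volume.restrict (Icc 0 ℓ)) :=
    memLp_top_of_bound hSm.aestronglyMeasurable MS <| hS.mono fun σ hσ => by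
      rw [Real.norm_of_nonneg (hω.le.trans hσ.1)]
      exact hσ.2
  have hSpos : 0 < ∫ σ in Icc 0 ℓ, S σ := by
    calc 0 < ℓ * ω := mul_pos hℓ hω
      _ = ∫ σ in Icc 0 ℓ, ω := by simp [Real.volume_real_Icc_of_le hℓ.le]
      _ ≤ ∫ σ in Icc 0 ℓ, S σ :=
        integral_mono_ae (integrable_const ω) (hSbdd.integrable le_top) (hS.mono fun σ hσ => hσ.1)
  obtain ⟨lam, hlam, hunique⟩ := existsUnique_integral_comp_sub_mul_eq_zero
    (hΦ.lipschitzWith_idSubOrderIso_symm hK) (hκ.integrable one_le_two) hSbdd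
    (by positivity) (fun c c' => hΦ.inv_mul_sub_le_idSubOrderIso_symm_sub hK) hS0 hSpos
  refine ⟨⟨_, lam, isSolPair_idSubOrderIso_symm hΦ hK hκm hκ hlam⟩, fun V V' lam₁ lam₂ hV hV' => ?_⟩
  obtain rfl := hunique lam₁ (hV.integral_idSubOrderIso_symm_mul_eq_zero hΦ hK)
  obtain rfl := hunique lam₂ (hV'.integral_idSubOrderIso_symm_mul_eq_zero hΦ hK)
  exact ⟨rfl, (hV'.ae_eq_idSubOrderIso_symm hΦ hK).trans (hV.ae_eq_idSubOrderIso_symm hΦ hK).symm⟩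

/-- existence and uniqueness of the pair (V, λ) solving
V = κ + Φ(V) − λ a.e. on I with ∫_I V·S dσ = 0. -/
theorem stmt1 (Φ : ℝ → ℝ) (J : ℝ) (hJ0 : 0 ≤ J) (hJ1 : J < 1)
    (hΦlip : ∀ a b : ℝ, |Φ a - Φ b| ≤ J * |a - b|)
    (hΦbd : ∃ B : ℝ, ∀ x : ℝ, |Φ x| ≤ B)
    (ℓ : ℝ) (hℓ : 0 < ℓ)
    (κ S : ℝ → ℝ) (hκm : Measurable κ)
    (hκ2 : IntegrableOn (fun σ => (κ σ) ^ 2) (Icc 0 ℓ))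
    (hSm : Measurable S)
    (ω MS : ℝ) (hω : 0 < ω) (hωMS : ω ≤ MS)
    (hS : ∀ᵐ σ ∂(volume.restrict (Icc (0:ℝ) ℓ)), ω ≤ S σ ∧ S σ ≤ MS) :
    (∃ V : ℝ → ℝ, ∃ lam : ℝ, IsSolPair Φ κ S ℓ V lam) ∧
    (∀ V V' : ℝ → ℝ, ∀ lam lam' : ℝ,
      IsSolPair Φ κ S ℓ V lam → IsSolPair Φ κ S ℓ V' lam' →
      lam' = lam ∧ V' =ᵐ[volume.restrict (Icc (0:ℝ) ℓ)] V) :=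
  stmt1_general Φ J hJ1 hΦlip ℓ hℓ κ S hκm hκ2 hSm ω MS hω hS
end

section
/- Let κ : I → ℝ and S : I → ℝ be continuous with S(σ) > 0 for all σ ∈ I, and let Ψ be the inverse of the strictly increasing bijection V ↦ V − Φ(V). Then there exists a unique λ ∈ ℝ such that ∫₀^ℓ Ψ(κ(σ) − λ)·S(σ) dσ = 0. -/
open MeasureTheory Set

/-!
Write `F V = V - Φ V`. Since `Φ` is `J`-Lipschitz with `J < 1`, every difference quotient of `F`
lies in `[1 - J, 1 + J]`, so `F` is a homeomorphism of `ℝ` and the difference quotients of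
`Ψ = F⁻¹` lie in `[(1 + J)⁻¹, (1 - J)⁻¹]`. Integrating against the positive weight `S`, the same
holds for `λ ↦ -∫ Ψ(κ - λ) S` with both bounds scaled by `∫ S > 0`; a function of `ℝ` whose
difference quotients are bounded below by a positive constant takes every value exactly once.
-/

def HasSlopeBounds (k K : ℝ) (g : ℝ → ℝ) : Prop :=
  ∀ a b, a ≤ b → k * (b - a) ≤ g b - g a ∧ g b - g a ≤ K * (b - a)

namespace HasSlopeBounds

variable {k K : ℝ} {g : ℝ → ℝ}

theorem lower_le_upper (hg : HasSlopeBounds k K g) : k ≤ K := by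
  obtain ⟨hlo, hhi⟩ := hg 0 1 zero_le_one
  linarith

theorem strictMono (hg : HasSlopeBounds k K g) (hk : 0 < k) : StrictMono g := fun a b hab => by
  have := (hg a b hab.le).1
  nlinarith

theorem continuous (hg : HasSlopeBounds k K g) (hk : 0 ≤ k) : Continuous g := by
  refine (LipschitzWith.of_dist_le_mul fun a b => ?_).continuous (K := K.toNNReal)
  have abs_sub_le : ∀ a b, a ≤ b → |g a - g b| ≤ K * |a - b| := fun a b hab => by
    obtain ⟨hlo, hhi⟩ := hg a b hab
    rw [abs_sub_comm, abs_of_nonneg (by nlinarith), abs_sub_comm,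
      abs_of_nonneg (sub_nonneg.2 hab)]
    exact hhi
  rw [Real.dist_eq, Real.dist_eq]
  refine le_trans ?_ (mul_le_mul_of_nonneg_right (Real.le_coe_toNNReal K) (abs_nonneg _))
  rcases le_total a b with hab | hba
  · exact abs_sub_le a b hab
  · rw [abs_sub_comm, abs_sub_comm a]
    exact abs_sub_le b a hba

theorem existsUnique_eq (hg : HasSlopeBounds k K g) (hk : 0 < k) (y : ℝ) : ∃! x, g x = y := by
  set r := |y - g 0| / k
  have hr : 0 ≤ r := by positivity
  have hkr : k * r = |y - g 0| := mul_div_cancel₀ _ hk.ne'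
  have hlow : g (-r) ≤ y := by
    have := (hg (-r) 0 (by linarith)).1
    have := le_abs_self (g 0 - y)
    rw [abs_sub_comm] at hkr
    nlinarith
  have hhigh : y ≤ g r := by
    have := (hg 0 r hr).1
    have := le_abs_self (y - g 0)
    nlinarith
  obtain ⟨x, -, hx⟩ :=
    intermediate_value_Icc (by linarith) (hg.continuous hk.le).continuousOn ⟨hlow, hhigh⟩
  exact ⟨x, hx, fun x' hx' => (hg.strictMono hk).injective (hx'.trans hx.symm)⟩

theorem invFun (hg : HasSlopeBounds k K g) (hk : 0 < k) :
    HasSlopeBounds K⁻¹ k⁻¹ (Function.invFun g) := by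
  intro u v huv
  have hK : 0 < K := hk.trans_le hg.lower_le_upper
  have hinv : ∀ y, g (Function.invFun g y) = y := fun y =>
    Function.invFun_eq (hg.existsUnique_eq hk y).exists
  have hmono : Function.invFun g u ≤ Function.invFun g v :=
    (hg.strictMono hk).le_iff_le.1 (by rwa [hinv, hinv])
  obtain ⟨hlo, hhi⟩ := hg _ _ hmono
  rw [hinv, hinv] at hlo hhi
  constructor
  · rwa [inv_mul_le_iff₀ hK]
  · rwa [le_inv_mul_iff₀ hk]

theorem neg_integral_comp_sub_mul {X : Type*} [MeasurableSpace X] {μ : Measure X}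
    (hg : HasSlopeBounds k K g) {κ S : X → ℝ}
    (hint : ∀ l, Integrable (fun σ => g (κ σ - l) * S σ) μ) (hSint : Integrable S μ)
    (hS : 0 ≤ᵐ[μ] S) :
    HasSlopeBounds (k * ∫ σ, S σ ∂μ) (K * ∫ σ, S σ ∂μ)
      (fun l => -∫ σ, g (κ σ - l) * S σ ∂μ) := by
  intro l₁ l₂ hl
  have hdiff : (-∫ σ, g (κ σ - l₂) * S σ ∂μ) - -∫ σ, g (κ σ - l₁) * S σ ∂μ
      = ∫ σ, (g (κ σ - l₁) - g (κ σ - l₂)) * S σ ∂μ := by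
    rw [neg_sub_neg, ← integral_sub (hint l₁) (hint l₂)]
    simp only [sub_mul]
  have hpt : ∀ σ, k * (l₂ - l₁) ≤ g (κ σ - l₁) - g (κ σ - l₂) ∧
      g (κ σ - l₁) - g (κ σ - l₂) ≤ K * (l₂ - l₁) := fun σ => by
    simpa using hg (κ σ - l₂) (κ σ - l₁) (by linarith)
  have hdint : Integrable (fun σ => (g (κ σ - l₁) - g (κ σ - l₂)) * S σ) μ := by
    simp only [sub_mul]
    exact (hint l₁).sub (hint l₂)
  rw [hdiff, mul_right_comm, mul_right_comm K, ← integral_const_mul, ← integral_const_mul]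
  constructor
  · refine integral_mono_ae (hSint.const_mul _) hdint ?_
    filter_upwards [hS] with σ hσ
    exact mul_le_mul_of_nonneg_right (hpt σ).1 hσ
  · refine integral_mono_ae hdint (hSint.const_mul _) ?_
    filter_upwards [hS] with σ hσ
    exact mul_le_mul_of_nonneg_right (hpt σ).2 hσ

end HasSlopeBounds

theorem hasSlopeBounds_id_sub {Φ : ℝ → ℝ} {J : ℝ}
    (hΦ : ∀ a b : ℝ, |Φ a - Φ b| ≤ J * |a - b|) :
    HasSlopeBounds (1 - J) (1 + J) (fun V => V - Φ V) := fun a b hab => by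
  have h := abs_le.1 ((hΦ b a).trans_eq (by rw [abs_of_nonneg (sub_nonneg.2 hab)]))
  constructor <;> linarith [h.1, h.2]

theorem setIntegral_Icc_pos_of_pos {S : ℝ → ℝ} {ℓ : ℝ} (hℓ : 0 < ℓ)
    (hS : ContinuousOn S (Icc 0 ℓ)) (hSpos : ∀ σ ∈ Icc (0:ℝ) ℓ, 0 < S σ) :
    0 < ∫ σ in Icc 0 ℓ, S σ := by
  rw [setIntegral_pos_iff_support_of_nonneg_ae
      ((ae_restrict_iff' measurableSet_Icc).2 (.of_forall fun σ hσ => (hSpos σ hσ).le))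
      (hS.integrableOn_Icc),
    inter_eq_right.2 (show Icc 0 ℓ ⊆ Function.support S from fun σ hσ => (hSpos σ hσ).ne'),
    Real.volume_Icc, sub_zero]
  exact ENNReal.ofReal_pos.2 hℓ

theorem stmt2_general (Φ : ℝ → ℝ) (J : ℝ) (hJ1 : J < 1)
    (hΦlip : ∀ a b : ℝ, |Φ a - Φ b| ≤ J * |a - b|)
    (ℓ : ℝ) (hℓ : 0 < ℓ)
    (κ S : ℝ → ℝ)
    (hκ : ContinuousOn κ (Icc 0 ℓ)) (hS : ContinuousOn S (Icc 0 ℓ))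
    (hSpos : ∀ σ ∈ Icc (0:ℝ) ℓ, 0 < S σ) :
    ∃! lam : ℝ,
      ∫ σ in Icc (0:ℝ) ℓ,
        Function.invFun (fun V : ℝ => V - Φ V) (κ σ - lam) * S σ = 0 := by
  have hF := hasSlopeBounds_id_sub hΦlip
  have hJ : 0 < 1 - J := by linarith
  have hΨ := hF.invFun hJ
  have hΨcont := hΨ.continuous (inv_nonneg.2 (hJ.le.trans hF.lower_le_upper))
  have hG := hΨ.neg_integral_comp_sub_mul (κ := κ) (S := S) (μ := volume.restrict (Icc 0 ℓ))
    (fun l => ((hΨcont.comp_continuousOn (hκ.sub continuousOn_const)).mul hS).integrableOn_Icc)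
    hS.integrableOn_Icc
    ((ae_restrict_iff' measurableSet_Icc).2 (.of_forall fun σ hσ => (hSpos σ hσ).le))
  have hpos : 0 < (1 + J)⁻¹ * ∫ σ in Icc 0 ℓ, S σ :=
    mul_pos (inv_pos.2 (hJ.trans_le hF.lower_le_upper)) (setIntegral_Icc_pos_of_pos hℓ hS hSpos)
  simpa only [neg_eq_zero] using hG.existsUnique_eq hpos 0

/-- for κ, S continuous on I = [0, ℓ] with S > 0, there is a
unique λ ∈ ℝ such that ∫₀^ℓ Ψ(κ(σ) − λ)·S(σ) dσ = 0, where Ψ is the inverse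
of the strictly increasing bijection V ↦ V − Φ(V). -/
theorem stmt2 (Φ : ℝ → ℝ) (J : ℝ) (hJ0 : 0 ≤ J) (hJ1 : J < 1)
    (hΦlip : ∀ a b : ℝ, |Φ a - Φ b| ≤ J * |a - b|)
    (hΦbd : ∃ B : ℝ, ∀ x : ℝ, |Φ x| ≤ B)
    (ℓ : ℝ) (hℓ : 0 < ℓ)
    (κ S : ℝ → ℝ)
    (hκ : ContinuousOn κ (Icc 0 ℓ)) (hS : ContinuousOn S (Icc 0 ℓ))
    (hSpos : ∀ σ ∈ Icc (0:ℝ) ℓ, 0 < S σ) :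
    ∃! lam : ℝ,
      ∫ σ in Icc (0:ℝ) ℓ,
        Function.invFun (fun V : ℝ => V - Φ V) (κ σ - lam) * S σ = 0 :=
  stmt2_general Φ J hJ1 hΦlip ℓ hℓ κ S hκ hS hSpos
end

section
/- Suppose V : I → ℝ is measurable, λ ∈ ℝ, V(σ) = κ(σ) + Φ(V(σ)) − λ for almost every σ ∈ I, and ∫_I V·S dσ = 0. Then the a priori estimate (∫_I V² dσ)^{1/2} ≤ (M_S/ω)^{1/2} · ( (∫_I κ² dσ)^{1/2} + ℓ^{1/2}·sup_{x∈ℝ}|Φ(x)| ) holds. -/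
/-!
Put `f = κ + Φ ∘ V`, so that `V = f - λ` a.e. Since `V` is orthogonal to the constants in
`L²(S dσ)`, Pythagoras gives `∫ f² S = ∫ V² S + λ² ∫ S ≥ ∫ V² S`, and the bounds `ω ≤ S ≤ M_S`
turn this into `ω ‖V‖² ≤ M_S ‖f‖²`. Minkowski's inequality and `|Φ| ≤ sup |Φ|` on an interval of
length `ℓ` then bound `‖f‖ ≤ ‖κ‖ + ℓ^{1/2} sup |Φ|`.
-/

open MeasureTheory Set

namespace MeasureTheory

variable {α : Type*} [MeasurableSpace α] {μ : Measure α}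

theorem MemLp.sqrt_integral_sq_eq_eLpNorm {f : α → ℝ} (hf : MemLp f 2 μ) :
    √(∫ x, f x ^ 2 ∂μ) = (eLpNorm f 2 μ).toReal := by
  rw [hf.eLpNorm_eq_integral_rpow_norm two_ne_zero ENNReal.ofNat_ne_top,
    ENNReal.toReal_ofReal (by positivity), Real.sqrt_eq_rpow]
  norm_num [Real.norm_eq_abs]

theorem sqrt_integral_add_sq_le {f g : α → ℝ} (hf : MemLp f 2 μ) (hg : MemLp g 2 μ) :
    √(∫ x, (f x + g x) ^ 2 ∂μ) ≤ √(∫ x, f x ^ 2 ∂μ) + √(∫ x, g x ^ 2 ∂μ) := by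
  have hfg := (hf.add hg).sqrt_integral_sq_eq_eLpNorm
  simp only [Pi.add_apply] at hfg
  rw [hfg, hf.sqrt_integral_sq_eq_eLpNorm, hg.sqrt_integral_sq_eq_eLpNorm]
  exact ENNReal.toReal_le_add (eLpNorm_add_le hf.1 hg.1 one_le_two) hf.eLpNorm_ne_top
    hg.eLpNorm_ne_top

theorem sqrt_integral_sq_le_of_abs_le [IsFiniteMeasure μ] {g : α → ℝ} {B : ℝ} (hB : 0 ≤ B)
    (hg : ∀ᵐ x ∂μ, |g x| ≤ B) : √(∫ x, g x ^ 2 ∂μ) ≤ √(μ.real univ) * B := by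
  have hsq : ∫ x, g x ^ 2 ∂μ ≤ μ.real univ * B ^ 2 := by
    rw [← smul_eq_mul, ← integral_const]
    refine integral_mono_of_nonneg (ae_of_all _ fun x => sq_nonneg _) (integrable_const _) ?_
    filter_upwards [hg] with x hx
    simpa only [sq_abs] using pow_le_pow_left₀ (abs_nonneg _) hx 2
  simpa only [Real.sqrt_mul measureReal_nonneg, Real.sqrt_sq hB] using Real.sqrt_le_sqrt hsq

theorem integral_sq_mul_le_integral_add_const_sq_mul {V w : α → ℝ} (c : ℝ) (hw : 0 ≤ᵐ[μ] w)
    (hV2w : Integrable (fun x => V x ^ 2 * w x) μ) (hVw : Integrable (fun x => V x * w x) μ)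
    (hwi : Integrable w μ) (horth : ∫ x, V x * w x ∂μ = 0) :
    ∫ x, V x ^ 2 * w x ∂μ ≤ ∫ x, (V x + c) ^ 2 * w x ∂μ := by
  have hexp : ∫ x, (V x + c) ^ 2 * w x ∂μ =
      ∫ x, V x ^ 2 * w x ∂μ + 2 * c * ∫ x, V x * w x ∂μ + c ^ 2 * ∫ x, w x ∂μ := by
    rw [integral_congr_ae (ae_of_all _ fun x => show (V x + c) ^ 2 * w x =
        V x ^ 2 * w x + 2 * c * (V x * w x) + c ^ 2 * w x by ring),
      integral_add _ (hwi.const_mul _), integral_add hV2w (hVw.const_mul _), integral_const_mul,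
      integral_const_mul]
    exact hV2w.add (hVw.const_mul _)
  rw [hexp, horth]
  nlinarith [integral_nonneg_of_ae hw, sq_nonneg c]

theorem integral_sq_le_div_mul_integral_add_const_sq [IsFiniteMeasure μ] {V w : α → ℝ}
    {m M : ℝ} (c : ℝ) (hm : 0 < m) (hw : ∀ᵐ x ∂μ, m ≤ w x ∧ w x ≤ M)
    (hwm : AEStronglyMeasurable w μ) (hV : MemLp V 2 μ) (horth : ∫ x, V x * w x ∂μ = 0) :
    ∫ x, V x ^ 2 ∂μ ≤ M / m * ∫ x, (V x + c) ^ 2 ∂μ := by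
  have hwb : ∀ᵐ x ∂μ, ‖w x‖ ≤ M := by
    filter_upwards [hw] with x hx
    rw [Real.norm_eq_abs, abs_le]
    constructor <;> linarith [hx.1, hx.2]
  have hVc : MemLp (fun x => V x + c) 2 μ := hV.add (memLp_const c)
  have lower : m * ∫ x, V x ^ 2 ∂μ ≤ ∫ x, V x ^ 2 * w x ∂μ := by
    rw [← integral_const_mul]
    refine integral_mono_ae (hV.integrable_sq.const_mul m) (hV.integrable_sq.mul_bdd hwm hwb) ?_
    filter_upwards [hw] with x hx
    nlinarith [sq_nonneg (V x), hx.1]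
  have upper : ∫ x, (V x + c) ^ 2 * w x ∂μ ≤ M * ∫ x, (V x + c) ^ 2 ∂μ := by
    rw [← integral_const_mul]
    refine integral_mono_ae (hVc.integrable_sq.mul_bdd hwm hwb) (hVc.integrable_sq.const_mul M) ?_
    filter_upwards [hw] with x hx
    nlinarith [sq_nonneg (V x + c), hx.2]
  have pyth := integral_sq_mul_le_integral_add_const_sq_mul c
    (hw.mono fun x hx => hm.le.trans hx.1) (hV.integrable_sq.mul_bdd hwm hwb)
    ((hV.integrable one_le_two).mul_bdd hwm hwb)
    ((memLp_top_of_bound hwm M hwb).integrable le_top) horth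
  rw [div_mul_eq_mul_div, le_div_iff₀ hm]
  linarith

end MeasureTheory

theorem stmt3_general (Φ : ℝ → ℝ)
    (hΦbd : ∃ B : ℝ, ∀ x : ℝ, |Φ x| ≤ B)
    (ℓ : ℝ) (hℓ : 0 < ℓ)
    (κ S : ℝ → ℝ) (hκm : Measurable κ)
    (hκ2 : IntegrableOn (fun σ => (κ σ) ^ 2) (Icc 0 ℓ))
    (hSm : Measurable S)
    (ω MS : ℝ) (hω : 0 < ω)
    (hS : ∀ᵐ σ ∂(volume.restrict (Icc (0:ℝ) ℓ)), ω ≤ S σ ∧ S σ ≤ MS)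
    (V : ℝ → ℝ) (hVm : Measurable V) (lam : ℝ)
    (heq : ∀ᵐ σ ∂(volume.restrict (Icc (0:ℝ) ℓ)), V σ = κ σ + Φ (V σ) - lam)
    (hint : ∫ σ in Icc (0:ℝ) ℓ, V σ * S σ = 0) :
    Real.sqrt (∫ σ in Icc (0:ℝ) ℓ, (V σ) ^ 2) ≤
      Real.sqrt (MS / ω) *
        (Real.sqrt (∫ σ in Icc (0:ℝ) ℓ, (κ σ) ^ 2) +
          Real.sqrt ℓ * ⨆ x : ℝ, |Φ x|) := by
  set μ := volume.restrict (Icc (0:ℝ) ℓ)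
  obtain ⟨B, hB⟩ := hΦbd
  have hsup : ∀ x, |Φ x| ≤ ⨆ y, |Φ y| := le_ciSup ⟨B, by rintro _ ⟨y, rfl⟩; exact hB y⟩
  -- `Φ ∘ V` need not be measurable a priori, but the equation identifies it a.e. with `V - κ + λ`.
  have hΦV : ∀ᵐ σ ∂μ, V σ + lam = κ σ + Φ (V σ) := heq.mono fun σ h => by linarith
  have hκ : MemLp κ 2 μ := (memLp_two_iff_integrable_sq hκm.aestronglyMeasurable).mpr hκ2
  have hΦVm : AEStronglyMeasurable (fun σ => Φ (V σ)) μ :=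
    ((hVm.add_const lam).sub hκm).aestronglyMeasurable.congr
      (hΦV.mono fun σ h => by simp only [Pi.sub_apply, h]; ring)
  have hg : MemLp (fun σ => Φ (V σ)) 2 μ :=
    (memLp_top_of_bound hΦVm _ (ae_of_all _ fun σ => hsup (V σ))).mono_exponent le_top
  have hV : MemLp V 2 μ :=
    ((hκ.add hg).sub (memLp_const lam)).ae_eq
      (hΦV.mono fun σ h => by simp only [Pi.add_apply, Pi.sub_apply, ← h]; ring)
  calc √(∫ σ, V σ ^ 2 ∂μ) ≤ √(MS / ω * ∫ σ, (V σ + lam) ^ 2 ∂μ) :=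
        Real.sqrt_le_sqrt (integral_sq_le_div_mul_integral_add_const_sq lam hω hS
          hSm.aestronglyMeasurable hV hint)
    _ = √(MS / ω) * √(∫ σ, (κ σ + Φ (V σ)) ^ 2 ∂μ) := by
        rw [Real.sqrt_mul' _ (integral_nonneg fun σ => sq_nonneg _)]
        congr 2
        exact integral_congr_ae (hΦV.mono fun σ h => by simp only [h])
    _ ≤ √(MS / ω) * (√(∫ σ, κ σ ^ 2 ∂μ) + √ℓ * ⨆ x, |Φ x|) := by
        gcongr
        refine (sqrt_integral_add_sq_le hκ hg).trans (add_le_add_right ?_ _)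
        have hΦV_L2 := sqrt_integral_sq_le_of_abs_le (μ := μ) ((abs_nonneg _).trans (hsup 0))
          (ae_of_all _ fun σ => hsup (V σ))
        rwa [measureReal_restrict_apply_univ, Real.volume_real_Icc_of_le hℓ.le, sub_zero]
          at hΦV_L2

/-- a priori L² estimate for a solution V of
V = κ + Φ(V) − λ a.e. on I with ∫_I V·S dσ = 0:
‖V‖_{L²} ≤ (M_S/ω)^{1/2}·(‖κ‖_{L²} + ℓ^{1/2}·sup|Φ|). -/
theorem stmt3 (Φ : ℝ → ℝ) (J : ℝ) (hJ0 : 0 ≤ J) (hJ1 : J < 1)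
    (hΦlip : ∀ a b : ℝ, |Φ a - Φ b| ≤ J * |a - b|)
    (hΦbd : ∃ B : ℝ, ∀ x : ℝ, |Φ x| ≤ B)
    (ℓ : ℝ) (hℓ : 0 < ℓ)
    (κ S : ℝ → ℝ) (hκm : Measurable κ)
    (hκ2 : IntegrableOn (fun σ => (κ σ) ^ 2) (Icc 0 ℓ))
    (hSm : Measurable S)
    (ω MS : ℝ) (hω : 0 < ω) (hωMS : ω ≤ MS)
    (hS : ∀ᵐ σ ∂(volume.restrict (Icc (0:ℝ) ℓ)), ω ≤ S σ ∧ S σ ≤ MS)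
    (V : ℝ → ℝ) (hVm : Measurable V) (lam : ℝ)
    (heq : ∀ᵐ σ ∂(volume.restrict (Icc (0:ℝ) ℓ)), V σ = κ σ + Φ (V σ) - lam)
    (hint : ∫ σ in Icc (0:ℝ) ℓ, V σ * S σ = 0) :
    Real.sqrt (∫ σ in Icc (0:ℝ) ℓ, (V σ) ^ 2) ≤
      Real.sqrt (MS / ω) *
        (Real.sqrt (∫ σ in Icc (0:ℝ) ℓ, (κ σ) ^ 2) +
          Real.sqrt ℓ * ⨆ x : ℝ, |Φ x|) :=
  stmt3_general Φ hΦbd ℓ hℓ κ S hκm hκ2 hSm ω MS hω hS V hVm lam heq hint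
end

section
/- Let κ₁, κ₂ : I → ℝ be measurable and square integrable, and for i = 1, 2 let (V_i, λ_i) satisfy: V_i measurable and square integrable, V_i(σ) = κ_i(σ) + Φ(V_i(σ)) − λ_i almost everywhere on I, and ∫_I V_i·S dσ = 0 (with the same weight S for both). Then ‖V₁ − V₂‖_{L²(I)} ≤ (M_S/ω)^{1/2}·(1 − J)^{−1}·‖κ₁ − κ₂‖_{L²(I)}. In particular, the resolving map κ ↦ V is Lipschitz continuous from L²(I) to L²(I). -/
/-!
Write `W = V₁ - V₂`, `k = κ₁ - κ₂` and `c = λ₁ - λ₂`. Subtracting the two equations gives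
`W + c - k = Φ(V₁) - Φ(V₂)`, so `|W + c - k| ≤ J |W|`. In the Hilbert space `L²(I)`, the vector
`√S W` is orthogonal to `√S` because `∫ W S = 0`, hence `‖√S W‖ ≤ ‖√S W + c √S‖` by Pythagoras,
and `√S W + c √S = √S k + √S (W + c - k)` has norm at most `‖√S k‖ + J ‖√S W‖`. Thus
`(1 - J) ‖√S W‖ ≤ ‖√S k‖`, and `ω ≤ S ≤ M_S` converts these weighted norms into plain ones.
-/

open MeasureTheory Set

theorem norm_le_inv_one_sub_mul_of_inner_eq_zero {E : Type*} [NormedAddCommGroup E]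
    [InnerProductSpace ℝ E] {w e k : E} {c J : ℝ} (hJ : J < 1) (hwe : inner ℝ w e = 0)
    (hk : ‖w + c • e - k‖ ≤ J * ‖w‖) : ‖w‖ ≤ (1 - J)⁻¹ * ‖k‖ := by
  have hproj : ‖w‖ ≤ ‖w + c • e‖ := by
    have hpyth := norm_add_sq_eq_norm_sq_add_norm_sq_real
      (show inner ℝ w (c • e) = 0 by rw [real_inner_smul_right, hwe, mul_zero])
    exact (pow_le_pow_iff_left₀ (norm_nonneg _) (norm_nonneg _) two_ne_zero).1
      (by nlinarith [norm_nonneg (c • e)])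
  have htri : ‖w + c • e‖ ≤ ‖k‖ + J * ‖w‖ :=
    calc ‖w + c • e‖ = ‖k + (w + c • e - k)‖ := by rw [add_sub_cancel]
      _ ≤ ‖k‖ + ‖w + c • e - k‖ := norm_add_le _ _
      _ ≤ ‖k‖ + J * ‖w‖ := by gcongr
  rw [le_inv_mul_iff₀ (sub_pos.2 hJ)]
  linarith

namespace MeasureTheory

variable {α : Type*} [MeasurableSpace α] {μ : Measure α}

theorem MemLp.norm_toLp_eq_sqrt_integral_sq {f : α → ℝ} (hf : MemLp f 2 μ) :
    ‖hf.toLp f‖ = √(∫ x, f x ^ 2 ∂μ) := by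
  rw [← Real.sqrt_sq (norm_nonneg _), ← real_inner_self_eq_norm_sq, L2.inner_def]
  congr 1
  refine integral_congr_ae ?_
  filter_upwards [hf.coeFn_toLp] with x hx
  simp [hx, sq]

theorem MemLp.norm_toLp_mul_le_of_integral_mul_sq_eq_zero {ρ w k : α → ℝ} {c J : ℝ}
    (hρ : MemLp ρ 2 μ) (hρw : MemLp (fun x => ρ x * w x) 2 μ)
    (hρk : MemLp (fun x => ρ x * k x) 2 μ) (hJ : J < 1)
    (hwk : ∀ᵐ x ∂μ, |w x + c - k x| ≤ J * |w x|) (hmean : ∫ x, w x * ρ x ^ 2 ∂μ = 0) :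
    ‖hρw.toLp (fun x => ρ x * w x)‖ ≤ (1 - J)⁻¹ * ‖hρk.toLp (fun x => ρ x * k x)‖ := by
  set e := hρ.toLp ρ
  set W := hρw.toLp (fun x => ρ x * w x)
  set K := hρk.toLp (fun x => ρ x * k x)
  have he : e =ᵐ[μ] ρ := hρ.coeFn_toLp
  have hW : W =ᵐ[μ] fun x => ρ x * w x := hρw.coeFn_toLp
  have hK : K =ᵐ[μ] fun x => ρ x * k x := hρk.coeFn_toLp
  refine norm_le_inv_one_sub_mul_of_inner_eq_zero (e := e) (c := c) hJ ?_ ?_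
  · rw [L2.inner_def, ← hmean]
    refine integral_congr_ae ?_
    filter_upwards [hW, he] with x hWx hex
    rw [hWx, hex, Real.inner_apply]
    ring
  · refine Lp.norm_le_mul_norm_of_ae_le_mul ?_
    filter_upwards [Lp.coeFn_sub (W + c • e) K, Lp.coeFn_add W (c • e), Lp.coeFn_smul c e,
      hW, hK, he, hwk] with x h₁ h₂ h₃ hWx hKx hex hx
    simp only [h₁, Pi.sub_apply, h₂, Pi.add_apply, h₃, Pi.smul_apply, smul_eq_mul, hWx, hKx, hex,
      Real.norm_eq_abs]
    calc |ρ x * w x + c * ρ x - ρ x * k x| = |ρ x| * |w x + c - k x| := by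
          rw [← abs_mul]; ring_nf
      _ ≤ |ρ x| * (J * |w x|) := by gcongr
      _ = J * |ρ x * w x| := by rw [abs_mul]; ring

theorem sqrt_integral_sq_le_of_integral_mul_eq_zero [IsFiniteMeasure μ] {S w k : α → ℝ}
    {ω M c J : ℝ} (hω : 0 < ω) (hSm : AEStronglyMeasurable S μ)
    (hS : ∀ᵐ x ∂μ, ω ≤ S x ∧ S x ≤ M) (hw : MemLp w 2 μ) (hk : MemLp k 2 μ) (hJ : J < 1)
    (hwk : ∀ᵐ x ∂μ, |w x + c - k x| ≤ J * |w x|) (hmean : ∫ x, w x * S x ∂μ = 0) :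
    √(∫ x, w x ^ 2 ∂μ) ≤ √(M / ω) * (1 - J)⁻¹ * √(∫ x, k x ^ 2 ∂μ) := by
  set ρ : α → ℝ := fun x => √(S x)
  have hρ : ∀ᵐ x ∂μ, √ω ≤ ρ x ∧ ρ x ≤ √M := by
    filter_upwards [hS] with x hx using ⟨Real.sqrt_le_sqrt hx.1, Real.sqrt_le_sqrt hx.2⟩
  have hρ_top : MemLp ρ ⊤ μ :=
    memLp_top_of_bound (Real.continuous_sqrt.comp_aestronglyMeasurable hSm) √M <| by
      filter_upwards [hρ] with x hx
      rw [Real.norm_of_nonneg (Real.sqrt_nonneg _)]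
      exact hx.2
  have hρw : MemLp (fun x => ρ x * w x) 2 μ := hw.mul' hρ_top
  have hρk : MemLp (fun x => ρ x * k x) 2 μ := hk.mul' hρ_top
  have hmean' : ∫ x, w x * ρ x ^ 2 ∂μ = 0 := by
    rw [← hmean]
    refine integral_congr_ae ?_
    filter_upwards [hS] with x hx
    rw [Real.sq_sqrt (hω.le.trans hx.1)]
  have hW_norm : ‖hw.toLp w‖ ≤ (√ω)⁻¹ * ‖hρw.toLp (fun x => ρ x * w x)‖ := by
    refine Lp.norm_le_mul_norm_of_ae_le_mul ?_
    filter_upwards [hw.coeFn_toLp, hρw.coeFn_toLp, hρ] with x hwx hWx hx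
    rw [hwx, hWx, norm_mul, Real.norm_of_nonneg (Real.sqrt_nonneg _)]
    calc ‖w x‖ = (√ω)⁻¹ * (√ω * ‖w x‖) := by field_simp
      _ ≤ (√ω)⁻¹ * (ρ x * ‖w x‖) := by gcongr; exact hx.1
  have hK_norm : ‖hρk.toLp (fun x => ρ x * k x)‖ ≤ √M * ‖hk.toLp k‖ := by
    refine Lp.norm_le_mul_norm_of_ae_le_mul ?_
    filter_upwards [hk.coeFn_toLp, hρk.coeFn_toLp, hρ] with x hkx hKx hx
    rw [hkx, hKx, norm_mul, Real.norm_of_nonneg (Real.sqrt_nonneg _)]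
    exact mul_le_mul_of_nonneg_right hx.2 (norm_nonneg _)
  rw [← hw.norm_toLp_eq_sqrt_integral_sq, ← hk.norm_toLp_eq_sqrt_integral_sq]
  calc ‖hw.toLp w‖ ≤ (√ω)⁻¹ * ‖hρw.toLp (fun x => ρ x * w x)‖ := hW_norm
    _ ≤ (√ω)⁻¹ * ((1 - J)⁻¹ * ‖hρk.toLp (fun x => ρ x * k x)‖) := by
      gcongr
      exact (hρ_top.mono_exponent le_top).norm_toLp_mul_le_of_integral_mul_sq_eq_zero hρw hρk
        hJ hwk hmean'
    _ ≤ (√ω)⁻¹ * ((1 - J)⁻¹ * (√M * ‖hk.toLp k‖)) := by gcongr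
    _ = √(M / ω) * (1 - J)⁻¹ * ‖hk.toLp k‖ := by rw [Real.sqrt_div' M hω.le]; ring

end MeasureTheory

theorem stmt4_general (Φ : ℝ → ℝ) (J : ℝ) (hJ1 : J < 1)
    (hΦlip : ∀ a b : ℝ, |Φ a - Φ b| ≤ J * |a - b|)
    (ℓ : ℝ)
    (S : ℝ → ℝ) (hSm : Measurable S)
    (ω MS : ℝ) (hω : 0 < ω)
    (hS : ∀ᵐ σ ∂(volume.restrict (Icc (0:ℝ) ℓ)), ω ≤ S σ ∧ S σ ≤ MS)
    (κ₁ κ₂ : ℝ → ℝ) (hκ₁m : Measurable κ₁) (hκ₂m : Measurable κ₂)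
    (hκ₁2 : IntegrableOn (fun σ => (κ₁ σ) ^ 2) (Icc 0 ℓ))
    (hκ₂2 : IntegrableOn (fun σ => (κ₂ σ) ^ 2) (Icc 0 ℓ))
    (V₁ V₂ : ℝ → ℝ) (hV₁m : Measurable V₁) (hV₂m : Measurable V₂)
    (hV₁2 : IntegrableOn (fun σ => (V₁ σ) ^ 2) (Icc 0 ℓ))
    (hV₂2 : IntegrableOn (fun σ => (V₂ σ) ^ 2) (Icc 0 ℓ))
    (lam₁ lam₂ : ℝ)
    (heq₁ : ∀ᵐ σ ∂(volume.restrict (Icc (0:ℝ) ℓ)),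
      V₁ σ = κ₁ σ + Φ (V₁ σ) - lam₁)
    (heq₂ : ∀ᵐ σ ∂(volume.restrict (Icc (0:ℝ) ℓ)),
      V₂ σ = κ₂ σ + Φ (V₂ σ) - lam₂)
    (hint₁ : ∫ σ in Icc (0:ℝ) ℓ, V₁ σ * S σ = 0)
    (hint₂ : ∫ σ in Icc (0:ℝ) ℓ, V₂ σ * S σ = 0) :
    Real.sqrt (∫ σ in Icc (0:ℝ) ℓ, (V₁ σ - V₂ σ) ^ 2) ≤
      Real.sqrt (MS / ω) * (1 - J)⁻¹ *
        Real.sqrt (∫ σ in Icc (0:ℝ) ℓ, (κ₁ σ - κ₂ σ) ^ 2) := by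
  have memLp_two {f : ℝ → ℝ} (hf : Measurable f)
      (hf2 : IntegrableOn (fun σ => f σ ^ 2) (Icc 0 ℓ) volume) :
      MemLp f 2 (volume.restrict (Icc 0 ℓ)) :=
    (memLp_two_iff_integrable_sq hf.aestronglyMeasurable).2 hf2
  have hV₁ := memLp_two hV₁m hV₁2
  have hV₂ := memLp_two hV₂m hV₂2
  have hS_norm : ∀ᵐ σ ∂(volume.restrict (Icc (0:ℝ) ℓ)), ‖S σ‖ ≤ MS := by
    filter_upwards [hS] with σ hσ
    rw [Real.norm_of_nonneg (hω.le.trans hσ.1)]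
    exact hσ.2
  have hmean : ∫ σ in Icc (0:ℝ) ℓ, (V₁ σ - V₂ σ) * S σ = 0 := by
    simp_rw [sub_mul]
    rw [integral_sub ((hV₁.integrable one_le_two).mul_bdd hSm.aestronglyMeasurable hS_norm)
      ((hV₂.integrable one_le_two).mul_bdd hSm.aestronglyMeasurable hS_norm), hint₁, hint₂,
      sub_zero]
  have hΦdiff : ∀ᵐ σ ∂(volume.restrict (Icc (0:ℝ) ℓ)),
      |V₁ σ - V₂ σ + (lam₁ - lam₂) - (κ₁ σ - κ₂ σ)| ≤ J * |V₁ σ - V₂ σ| := by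
    filter_upwards [heq₁, heq₂] with σ h₁ h₂
    convert hΦlip (V₁ σ) (V₂ σ) using 2
    linarith
  exact sqrt_integral_sq_le_of_integral_mul_eq_zero hω hSm.aestronglyMeasurable hS
    (hV₁.sub hV₂) ((memLp_two hκ₁m hκ₁2).sub (memLp_two hκ₂m hκ₂2)) hJ1 hΦdiff hmean

/-- Lipschitz continuity of the resolving map κ ↦ V in L²(I):
if (Vᵢ, λᵢ) solves Vᵢ = κᵢ + Φ(Vᵢ) − λᵢ a.e. with ∫ Vᵢ·S = 0 (same weight S),
then ‖V₁ − V₂‖_{L²} ≤ (M_S/ω)^{1/2}·(1 − J)⁻¹·‖κ₁ − κ₂‖_{L²}. -/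
theorem stmt4 (Φ : ℝ → ℝ) (J : ℝ) (hJ0 : 0 ≤ J) (hJ1 : J < 1)
    (hΦlip : ∀ a b : ℝ, |Φ a - Φ b| ≤ J * |a - b|)
    (hΦbd : ∃ B : ℝ, ∀ x : ℝ, |Φ x| ≤ B)
    (ℓ : ℝ) (hℓ : 0 < ℓ)
    (S : ℝ → ℝ) (hSm : Measurable S)
    (ω MS : ℝ) (hω : 0 < ω) (hωMS : ω ≤ MS)
    (hS : ∀ᵐ σ ∂(volume.restrict (Icc (0:ℝ) ℓ)), ω ≤ S σ ∧ S σ ≤ MS)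
    (κ₁ κ₂ : ℝ → ℝ) (hκ₁m : Measurable κ₁) (hκ₂m : Measurable κ₂)
    (hκ₁2 : IntegrableOn (fun σ => (κ₁ σ) ^ 2) (Icc 0 ℓ))
    (hκ₂2 : IntegrableOn (fun σ => (κ₂ σ) ^ 2) (Icc 0 ℓ))
    (V₁ V₂ : ℝ → ℝ) (hV₁m : Measurable V₁) (hV₂m : Measurable V₂)
    (hV₁2 : IntegrableOn (fun σ => (V₁ σ) ^ 2) (Icc 0 ℓ))
    (hV₂2 : IntegrableOn (fun σ => (V₂ σ) ^ 2) (Icc 0 ℓ))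
    (lam₁ lam₂ : ℝ)
    (heq₁ : ∀ᵐ σ ∂(volume.restrict (Icc (0:ℝ) ℓ)),
      V₁ σ = κ₁ σ + Φ (V₁ σ) - lam₁)
    (heq₂ : ∀ᵐ σ ∂(volume.restrict (Icc (0:ℝ) ℓ)),
      V₂ σ = κ₂ σ + Φ (V₂ σ) - lam₂)
    (hint₁ : ∫ σ in Icc (0:ℝ) ℓ, V₁ σ * S σ = 0)
    (hint₂ : ∫ σ in Icc (0:ℝ) ℓ, V₂ σ * S σ = 0) :
    Real.sqrt (∫ σ in Icc (0:ℝ) ℓ, (V₁ σ - V₂ σ) ^ 2) ≤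
      Real.sqrt (MS / ω) * (1 - J)⁻¹ *
        Real.sqrt (∫ σ in Icc (0:ℝ) ℓ, (κ₁ σ - κ₂ σ) ^ 2) :=
  stmt4_general Φ J hJ1 hΦlip ℓ S hSm ω MS hω hS κ₁ κ₂ hκ₁m hκ₂m hκ₁2 hκ₂2 V₁ V₂ hV₁m hV₂m hV₁2 hV₂2
    lam₁ lam₂ heq₁ heq₂ hint₁ hint₂
end

section
/- Let κ : I → ℝ be measurable and square integrable, let S₁, S₂ : I → ℝ be measurable with ω ≤ S_i(σ) ≤ M_S almost everywhere (i = 1, 2), and for i = 1, 2 let (V_i, λ_i) satisfy: V_i measurable and square integrable, V_i(σ) = κ(σ) + Φ(V_i(σ)) − λ_i almost everywhere on I, and ∫_I V_i·S_i dσ = 0. Then ‖V₁ − V₂‖_{L²(I)} ≤ ((1 + J)/(ω·(1 − J)))·‖V₂‖_{L²(I)}·ess sup_{σ∈I}|S₁(σ) − S₂(σ)|. -/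
/-!
Write W = V₁ - V₂ and c = λ₁ - λ₂. Subtracting the two equations gives W + c = Φ(V₁) - Φ(V₂),
so |W + c| ≤ J |W| pointwise. Testing this against W S₁ gives the energy estimate
ω (1 - J) ‖W‖² ≤ -c ∫ W S₁, and the two orthogonality conditions turn ∫ W S₁ into
-∫ V₂ (S₁ - S₂), which Cauchy–Schwarz bounds by D √ℓ ‖V₂‖. The same pointwise bound gives
|c| ≤ (1 + J) |W|, hence |c| √ℓ ≤ (1 + J) ‖W‖, and dividing by ‖W‖ finishes the proof.
-/

open MeasureTheory Set

section FiniteMeasure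

variable {α : Type*} [MeasurableSpace α] {μ : Measure α} [IsFiniteMeasure μ]

theorem integral_abs_le_sqrt_measureReal_univ_mul {f : α → ℝ} (hf : MemLp f 2 μ) :
    ∫ x, |f x| ∂μ ≤ √(μ.real univ) * √(∫ x, f x ^ 2 ∂μ) := by
  have h := integral_mul_le_Lp_mul_Lq_of_nonneg Real.HolderConjugate.two_two
    (ae_of_all μ fun x => abs_nonneg (f x)) (ae_of_all μ fun _ => zero_le_one)
    (by rw [ENNReal.ofReal_ofNat]; exact hf.abs) (by simpa using memLp_const (1 : ℝ))
  simpa [Real.sqrt_eq_rpow, mul_comm] using h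

theorem mul_integral_sq_le_neg_mul_integral_mul {W S : α → ℝ} {c J ω M : ℝ}
    (hω : 0 ≤ ω) (hJ : J ≤ 1) (hW : MemLp W 2 μ) (hSm : AEStronglyMeasurable S μ)
    (hS : ∀ᵐ x ∂μ, ω ≤ S x ∧ S x ≤ M) (hWc : ∀ᵐ x ∂μ, |W x + c| ≤ J * |W x|) :
    ω * (1 - J) * ∫ x, W x ^ 2 ∂μ ≤ -c * ∫ x, W x * S x ∂μ := by
  have hWS : Integrable (fun x => W x * S x) μ :=
    (hW.integrable one_le_two).mul_bdd hSm <| hS.mono fun x hx =>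
      abs_le.2 ⟨by linarith [hx.1, hx.2], hx.2⟩
  rw [← integral_const_mul, ← integral_const_mul]
  refine integral_mono_ae (hW.integrable_sq.const_mul _) (hWS.const_mul _) ?_
  filter_upwards [hS, hWc] with x hSx hx
  obtain ⟨hωS, -⟩ := hSx
  have hprod : W x * (W x + c) ≤ J * W x ^ 2 :=
    calc W x * (W x + c) ≤ |W x| * |W x + c| := by rw [← abs_mul]; exact le_abs_self _
      _ ≤ |W x| * (J * |W x|) := by gcongr
      _ = J * W x ^ 2 := by rw [← sq_abs (W x)]; ring
  nlinarith [mul_le_mul_of_nonneg_right hprod (hω.trans hωS), sq_nonneg (W x),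
    mul_le_mul_of_nonneg_left hωS (mul_nonneg (sub_nonneg.2 hJ) (sq_nonneg (W x)))]

theorem abs_mul_sqrt_measureReal_univ_le {W : α → ℝ} {c J : ℝ} (hJ : 0 ≤ J)
    (hW : MemLp W 2 μ) (hWc : ∀ᵐ x ∂μ, |W x + c| ≤ J * |W x|) :
    |c| * √(μ.real univ) ≤ (1 + J) * √(∫ x, W x ^ 2 ∂μ) := by
  have hint : |c| * μ.real univ ≤ (1 + J) * ∫ x, |W x| ∂μ := by
    rw [mul_comm, ← smul_eq_mul, ← integral_const, ← integral_const_mul]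
    refine integral_mono_ae (integrable_const _)
      ((hW.integrable one_le_two).abs.const_mul _) ?_
    filter_upwards [hWc] with x hx
    have hc : |c| ≤ |W x + c| + |W x| := by simpa using abs_sub (W x + c) (W x)
    linarith
  rcases (Real.sqrt_nonneg (μ.real univ)).eq_or_lt with h0 | hpos
  · rw [← h0, mul_zero]; positivity
  refine le_of_mul_le_mul_right ?_ hpos
  calc |c| * √(μ.real univ) * √(μ.real univ) = |c| * μ.real univ := by
        rw [mul_assoc, Real.mul_self_sqrt measureReal_nonneg]
    _ ≤ (1 + J) * ∫ x, |W x| ∂μ := hint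
    _ ≤ (1 + J) * (√(μ.real univ) * √(∫ x, W x ^ 2 ∂μ)) := by
        gcongr; exact integral_abs_le_sqrt_measureReal_univ_mul hW
    _ = (1 + J) * √(∫ x, W x ^ 2 ∂μ) * √(μ.real univ) := by ring

end FiniteMeasure

theorem abs_integral_mul_le_of_abs_le {α : Type*} [MeasurableSpace α] {μ : Measure α}
    {V g : α → ℝ} {D : ℝ} (hV : Integrable V μ) (hg : ∀ᵐ x ∂μ, |g x| ≤ D) :
    |∫ x, V x * g x ∂μ| ≤ D * ∫ x, |V x| ∂μ := by
  rw [← integral_const_mul, ← Real.norm_eq_abs]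
  refine norm_integral_le_of_norm_le (hV.abs.const_mul D) ?_
  filter_upwards [hg] with x hx
  rw [Real.norm_eq_abs, abs_mul, mul_comm]
  exact mul_le_mul_of_nonneg_right hx (abs_nonneg _)

theorem le_div_of_mul_sq_le_mul {A R k : ℝ} (hk : 0 < k) (hA : 0 ≤ A) (hR : 0 ≤ R)
    (h : k * A ^ 2 ≤ R * A) : A ≤ R / k := by
  rw [le_div_iff₀ hk]
  rcases hA.eq_or_lt with rfl | hpos
  · simpa using hR
  · nlinarith

theorem sqrt_integral_sq_sub_le_of_weight_perturbation {α : Type*} [MeasurableSpace α]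
    {μ : Measure α} [IsFiniteMeasure μ] {Φ : ℝ → ℝ} {J ω M D lam₁ lam₂ : ℝ}
    {κ S₁ S₂ V₁ V₂ : α → ℝ} (hJ0 : 0 ≤ J) (hJ1 : J < 1)
    (hΦlip : ∀ a b : ℝ, |Φ a - Φ b| ≤ J * |a - b|) (hω : 0 < ω) (hD0 : 0 ≤ D)
    (hS₁m : AEStronglyMeasurable S₁ μ) (hS₂m : AEStronglyMeasurable S₂ μ)
    (hS₁ : ∀ᵐ x ∂μ, ω ≤ S₁ x ∧ S₁ x ≤ M) (hD : ∀ᵐ x ∂μ, |S₁ x - S₂ x| ≤ D)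
    (hV₁ : MemLp V₁ 2 μ) (hV₂ : MemLp V₂ 2 μ)
    (heq₁ : ∀ᵐ x ∂μ, V₁ x = κ x + Φ (V₁ x) - lam₁)
    (heq₂ : ∀ᵐ x ∂μ, V₂ x = κ x + Φ (V₂ x) - lam₂)
    (hint₁ : ∫ x, V₁ x * S₁ x ∂μ = 0) (hint₂ : ∫ x, V₂ x * S₂ x ∂μ = 0) :
    √(∫ x, (V₁ x - V₂ x) ^ 2 ∂μ) ≤
      (1 + J) / (ω * (1 - J)) * √(∫ x, V₂ x ^ 2 ∂μ) * D := by
  set c := lam₁ - lam₂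
  have hW : MemLp (fun x => V₁ x - V₂ x) 2 μ := hV₁.sub hV₂
  have hWc : ∀ᵐ x ∂μ, |V₁ x - V₂ x + c| ≤ J * |V₁ x - V₂ x| := by
    filter_upwards [heq₁, heq₂] with x h₁ h₂
    rw [show V₁ x - V₂ x + c = Φ (V₁ x) - Φ (V₂ x) by linarith]
    exact hΦlip _ _
  have hS₁bdd : ∀ᵐ x ∂μ, ‖S₁ x‖ ≤ M := hS₁.mono fun x hx =>
    abs_le.2 ⟨by linarith [hx.1, hx.2], hx.2⟩
  have hV₁S₁ := (hV₁.integrable one_le_two).mul_bdd hS₁m hS₁bdd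
  have hV₂S₁ := (hV₂.integrable one_le_two).mul_bdd hS₁m hS₁bdd
  have hV₂dS : Integrable (fun x => V₂ x * (S₁ x - S₂ x)) μ :=
    (hV₂.integrable one_le_two).mul_bdd (hS₁m.sub hS₂m) hD
  have hcross : ∫ x, (V₁ x - V₂ x) * S₁ x ∂μ = -∫ x, V₂ x * (S₁ x - S₂ x) ∂μ := by
    have hsplit : ∫ x, V₂ x * S₂ x ∂μ =
        ∫ x, V₂ x * S₁ x ∂μ - ∫ x, V₂ x * (S₁ x - S₂ x) ∂μ := by
      rw [← integral_sub hV₂S₁ hV₂dS]; congr 1; ext x; ring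
    simp only [sub_mul]
    rw [integral_sub hV₁S₁ hV₂S₁]
    linarith
  set A := √(∫ x, (V₁ x - V₂ x) ^ 2 ∂μ)
  set B := √(∫ x, V₂ x ^ 2 ∂μ)
  have hA : A ^ 2 = ∫ x, (V₁ x - V₂ x) ^ 2 ∂μ :=
    Real.sq_sqrt (integral_nonneg fun x => sq_nonneg _)
  have hc := abs_mul_sqrt_measureReal_univ_le hJ0 hW hWc
  have hdS : |∫ x, V₂ x * (S₁ x - S₂ x) ∂μ| ≤ D * (√(μ.real univ) * B) :=
    (abs_integral_mul_le_of_abs_le (hV₂.integrable one_le_two) hD).trans <|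
      mul_le_mul_of_nonneg_left (integral_abs_le_sqrt_measureReal_univ_mul hV₂) hD0
  have henergy : ω * (1 - J) * A ^ 2 ≤ (1 + J) * B * D * A :=
    calc ω * (1 - J) * A ^ 2 ≤ -c * ∫ x, (V₁ x - V₂ x) * S₁ x ∂μ := by
          rw [hA]; exact mul_integral_sq_le_neg_mul_integral_mul hω.le hJ1.le hW hS₁m hS₁ hWc
      _ ≤ |c| * |∫ x, V₂ x * (S₁ x - S₂ x) ∂μ| := by
          rw [hcross, neg_mul_neg, ← abs_mul]; exact le_abs_self _
      _ ≤ |c| * (D * (√(μ.real univ) * B)) := by gcongr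
      _ = (|c| * √(μ.real univ)) * (D * B) := by ring
      _ ≤ (1 + J) * A * (D * B) := by gcongr
      _ = (1 + J) * B * D * A := by ring
  rw [div_mul_eq_mul_div, div_mul_eq_mul_div]
  exact le_div_of_mul_sq_le_mul (mul_pos hω (sub_pos.2 hJ1)) (Real.sqrt_nonneg _)
    (by positivity) henergy

theorem stmt5_general (Φ : ℝ → ℝ) (J : ℝ) (hJ0 : 0 ≤ J) (hJ1 : J < 1)
    (hΦlip : ∀ a b : ℝ, |Φ a - Φ b| ≤ J * |a - b|)
    (ℓ : ℝ) (hℓ : 0 < ℓ)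
    (ω MS : ℝ) (hω : 0 < ω)
    (κ : ℝ → ℝ)
    (S₁ S₂ : ℝ → ℝ) (hS₁m : Measurable S₁) (hS₂m : Measurable S₂)
    (hS₁ : ∀ᵐ σ ∂(volume.restrict (Icc (0:ℝ) ℓ)), ω ≤ S₁ σ ∧ S₁ σ ≤ MS)
    (V₁ V₂ : ℝ → ℝ) (hV₁m : Measurable V₁) (hV₂m : Measurable V₂)
    (hV₁2 : IntegrableOn (fun σ => (V₁ σ) ^ 2) (Icc 0 ℓ))
    (hV₂2 : IntegrableOn (fun σ => (V₂ σ) ^ 2) (Icc 0 ℓ))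
    (lam₁ lam₂ : ℝ)
    (heq₁ : ∀ᵐ σ ∂(volume.restrict (Icc (0:ℝ) ℓ)),
      V₁ σ = κ σ + Φ (V₁ σ) - lam₁)
    (heq₂ : ∀ᵐ σ ∂(volume.restrict (Icc (0:ℝ) ℓ)),
      V₂ σ = κ σ + Φ (V₂ σ) - lam₂)
    (hint₁ : ∫ σ in Icc (0:ℝ) ℓ, V₁ σ * S₁ σ = 0)
    (hint₂ : ∫ σ in Icc (0:ℝ) ℓ, V₂ σ * S₂ σ = 0) :
    ∀ D : ℝ, (∀ᵐ σ ∂(volume.restrict (Icc (0:ℝ) ℓ)), |S₁ σ - S₂ σ| ≤ D) →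
      Real.sqrt (∫ σ in Icc (0:ℝ) ℓ, (V₁ σ - V₂ σ) ^ 2) ≤
        ((1 + J) / (ω * (1 - J))) *
          Real.sqrt (∫ σ in Icc (0:ℝ) ℓ, (V₂ σ) ^ 2) * D := by
  intro D hD
  have : (ae (volume.restrict (Icc (0:ℝ) ℓ))).NeBot := by
    rw [ae_neBot, Ne, Measure.restrict_eq_zero, Real.volume_Icc, ENNReal.ofReal_eq_zero]
    linarith
  obtain ⟨σ, hσ⟩ := hD.exists
  exact sqrt_integral_sq_sub_le_of_weight_perturbation hJ0 hJ1 hΦlip hω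
    ((abs_nonneg _).trans hσ) hS₁m.aestronglyMeasurable hS₂m.aestronglyMeasurable hS₁ hD
    ((memLp_two_iff_integrable_sq hV₁m.aestronglyMeasurable).2 hV₁2)
    ((memLp_two_iff_integrable_sq hV₂m.aestronglyMeasurable).2 hV₂2) heq₁ heq₂ hint₁ hint₂

/-- Lipschitz continuity of the resolving map with respect to the
weight S: if (Vᵢ, λᵢ) solves Vᵢ = κ + Φ(Vᵢ) − λᵢ a.e. with ∫ Vᵢ·Sᵢ = 0, then
‖V₁ − V₂‖_{L²} ≤ ((1+J)/(ω(1−J)))·‖V₂‖_{L²}·ess sup|S₁ − S₂|, where the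
essential supremum bound is expressed by an arbitrary a.e. bound D. -/
theorem stmt5 (Φ : ℝ → ℝ) (J : ℝ) (hJ0 : 0 ≤ J) (hJ1 : J < 1)
    (hΦlip : ∀ a b : ℝ, |Φ a - Φ b| ≤ J * |a - b|)
    (hΦbd : ∃ B : ℝ, ∀ x : ℝ, |Φ x| ≤ B)
    (ℓ : ℝ) (hℓ : 0 < ℓ)
    (ω MS : ℝ) (hω : 0 < ω) (hωMS : ω ≤ MS)
    (κ : ℝ → ℝ) (hκm : Measurable κ)
    (hκ2 : IntegrableOn (fun σ => (κ σ) ^ 2) (Icc 0 ℓ))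
    (S₁ S₂ : ℝ → ℝ) (hS₁m : Measurable S₁) (hS₂m : Measurable S₂)
    (hS₁ : ∀ᵐ σ ∂(volume.restrict (Icc (0:ℝ) ℓ)), ω ≤ S₁ σ ∧ S₁ σ ≤ MS)
    (hS₂ : ∀ᵐ σ ∂(volume.restrict (Icc (0:ℝ) ℓ)), ω ≤ S₂ σ ∧ S₂ σ ≤ MS)
    (V₁ V₂ : ℝ → ℝ) (hV₁m : Measurable V₁) (hV₂m : Measurable V₂)
    (hV₁2 : IntegrableOn (fun σ => (V₁ σ) ^ 2) (Icc 0 ℓ))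
    (hV₂2 : IntegrableOn (fun σ => (V₂ σ) ^ 2) (Icc 0 ℓ))
    (lam₁ lam₂ : ℝ)
    (heq₁ : ∀ᵐ σ ∂(volume.restrict (Icc (0:ℝ) ℓ)),
      V₁ σ = κ σ + Φ (V₁ σ) - lam₁)
    (heq₂ : ∀ᵐ σ ∂(volume.restrict (Icc (0:ℝ) ℓ)),
      V₂ σ = κ σ + Φ (V₂ σ) - lam₂)
    (hint₁ : ∫ σ in Icc (0:ℝ) ℓ, V₁ σ * S₁ σ = 0)
    (hint₂ : ∫ σ in Icc (0:ℝ) ℓ, V₂ σ * S₂ σ = 0) :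
    ∀ D : ℝ, (∀ᵐ σ ∂(volume.restrict (Icc (0:ℝ) ℓ)), |S₁ σ - S₂ σ| ≤ D) →
      Real.sqrt (∫ σ in Icc (0:ℝ) ℓ, (V₁ σ - V₂ σ) ^ 2) ≤
        ((1 + J) / (ω * (1 - J))) *
          Real.sqrt (∫ σ in Icc (0:ℝ) ℓ, (V₂ σ) ^ 2) * D :=
  stmt5_general Φ J hJ0 hJ1 hΦlip ℓ hℓ ω MS hω κ S₁ S₂ hS₁m hS₂m hS₁ V₁ V₂ hV₁m hV₂m hV₁2 hV₂2 lam₁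
    lam₂ heq₁ heq₂ hint₁ hint₂
end

section
/- For every μ > 0 there exist constants C₂ ≥ 0 and C₃ ≥ 0, depending only on μ, ℓ, δ₀ and κ₀ (and not on u), such that for every three times continuously differentiable ℓ-periodic function u : ℝ → ℝ with |u(σ)| ≤ δ₀ for all σ, one has ∫₀^ℓ u″(σ)⁴ / S(σ)⁴ dσ ≤ μ·∫₀^ℓ u‴(σ)² / S(σ)² dσ + C₂·( ∫₀^ℓ u″(σ)² dσ )³ + C₃, where S(σ) := √( u′(σ)² + (1 − u(σ)·κ₀(σ))² ). -/
open MeasureTheory Set intervalIntegral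

/-- The metric factor S(σ) = √(u′(σ)² + (1 − u(σ)·κ₀(σ))²). -/
noncomputable def Sfun (κ₀ u : ℝ → ℝ) (σ : ℝ) : ℝ :=
  Real.sqrt ((deriv u σ) ^ 2 + (1 - u σ * κ₀ σ) ^ 2)

/-!
Put `φ = u''/S` and `ψ = u'''/S`. Since `|S'| ≤ |u''| + K S` for a constant `K` depending
only on `κ₀` and `δ₀`, one has `|φ'| ≤ |ψ| + φ² + K |φ|`. The periodic function `φ²` exceeds
its mean by at most `∫ |(φ²)'|`, so `∫ φ⁴ ≤ max φ² · ∫ φ²` is bounded, after Cauchy–Schwarz,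
by a polynomial in `e = ‖φ‖₂`, `d = ‖ψ‖₂` and `l = ‖φ‖₄²` in which `l` enters only through
the term `l e³`. Young's inequality absorbs that term and splits off `μ d²`, and
`e² ≤ c⁻² ∫ u''²` with `c = 1 - δ₀ sup |κ₀|`.
-/

section Derivatives

variable {𝕜 F : Type*} [NontriviallyNormedField 𝕜] [NormedAddCommGroup F] [NormedSpace 𝕜 F]

theorem Function.Periodic.deriv {f : 𝕜 → F} {c : 𝕜} (hf : Function.Periodic f c) :
    Function.Periodic (deriv f) c := fun x => by
  rw [← deriv_comp_add_const, funext hf]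

theorem Function.Periodic.iteratedDeriv {f : 𝕜 → F} {c : 𝕜} (hf : Function.Periodic f c)
    (n : ℕ) : Function.Periodic (iteratedDeriv n f) c := by
  induction n with
  | zero => simpa using hf
  | succ n ih => simpa only [iteratedDeriv_succ] using ih.deriv

theorem ContDiff.hasDerivAt_iteratedDeriv {f : 𝕜 → F} {n m : ℕ} (hf : ContDiff 𝕜 n f)
    (hm : m < n) (x : 𝕜) : HasDerivAt (iteratedDeriv m f) (iteratedDeriv (m + 1) f x) x := by
  rw [iteratedDeriv_succ]
  exact (hf.differentiable_iteratedDeriv m (by exact_mod_cast hm) x).hasDerivAt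

end Derivatives

theorem Function.Periodic.le_integral_div_add_integral_abs_deriv {h h' : ℝ → ℝ} {ℓ : ℝ}
    (hper : Function.Periodic h ℓ) (hℓ : 0 < ℓ) (hd : ∀ x, HasDerivAt h (h' x) x)
    (hh' : Continuous h') (σ : ℝ) :
    h σ ≤ (∫ x in (0:ℝ)..ℓ, h x) / ℓ + ∫ x in (0:ℝ)..ℓ, |h' x| := by
  have hc : Continuous h := continuous_iff_continuousAt.2 fun x => (hd x).continuousAt
  have h'per : Function.Periodic h' ℓ := by
    simpa only [funext fun x => (hd x).deriv] using hper.deriv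
  obtain ⟨_, ⟨σ₀, rfl⟩, hmin⟩ :=
    (hper.compact_of_continuous hℓ.ne' hc).exists_isLeast (range_nonempty h)
  have hmean : h σ₀ ≤ (∫ x in (0:ℝ)..ℓ, h x) / ℓ := by
    rw [le_div_iff₀ hℓ]
    simpa [mul_comm] using integral_mono_on hℓ.le (intervalIntegrable_const (μ := volume))
      (hc.intervalIntegrable _ _) fun x _ => hmin (mem_range_self x)
  obtain ⟨τ, hτ, hστ⟩ := hper.exists_mem_Ico hℓ σ σ₀
  have hIabs : ∀ a b, IntervalIntegrable (fun x => |h' x|) volume a b :=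
    fun a b => hh'.abs.intervalIntegrable a b
  have hvar : h τ - h σ₀ ≤ ∫ x in (0:ℝ)..ℓ, |h' x| := calc
    h τ - h σ₀ = ∫ x in σ₀..τ, h' x :=
      (integral_eq_sub_of_hasDerivAt (fun x _ => hd x) (hh'.intervalIntegrable _ _)).symm
    _ ≤ ∫ x in σ₀..τ, |h' x| :=
      integral_mono_on hτ.1 (hh'.intervalIntegrable _ _) (hIabs _ _) fun x _ => le_abs_self _
    _ ≤ ∫ x in σ₀..σ₀ + ℓ, |h' x| :=
      integral_mono_interval le_rfl hτ.1 hτ.2.le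
        (Filter.Eventually.of_forall fun _ => abs_nonneg _) (hIabs _ _)
    _ = ∫ x in (0:ℝ)..ℓ, |h' x| := by
      simpa using (h'per.comp fun y => |y|).intervalIntegral_add_eq σ₀ 0
  rw [hστ]
  linarith

theorem intervalIntegral.integral_mul_le_sqrt_mul_sqrt {a b : ℝ} (hab : a ≤ b) {F G : ℝ → ℝ}
    (hF : Continuous F) (hG : Continuous G) :
    ∫ x in a..b, F x * G x ≤
      √(∫ x in a..b, F x ^ 2) * √(∫ x in a..b, G x ^ 2) := by
  have hquad : ∀ t : ℝ, 0 ≤ (∫ x in a..b, F x ^ 2) * (t * t) +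
      (-2 * ∫ x in a..b, F x * G x) * t + ∫ x in a..b, G x ^ 2 := fun t => by
    have h0 : 0 ≤ ∫ x in a..b, (t * F x - G x) ^ 2 := integral_nonneg hab fun _ _ => sq_nonneg _
    have hexp : (fun x => (t * F x - G x) ^ 2) =
        fun x => (t * t) * F x ^ 2 + (-2 * t) * (F x * G x) + G x ^ 2 := by
      funext x; ring
    rw [hexp, integral_add, integral_add, integral_const_mul, integral_const_mul] at h0
    · linarith
    all_goals exact (by fun_prop : Continuous _).intervalIntegrable _ _
  have hdisc := discrim_le_zero hquad
  rw [discrim] at hdisc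
  rw [← Real.sqrt_mul (integral_nonneg hab fun _ _ => sq_nonneg _)]
  exact (le_abs_self _).trans (Real.abs_le_sqrt (by nlinarith))

theorem sq_le_add_of_sq_le_mul_sq {ℓ μ K e d l : ℝ} (hℓ : 0 < ℓ) (hμ : 0 < μ) (hK : 0 ≤ K)
    (h : l ^ 2 ≤ (e ^ 2 / ℓ + 2 * (e * d) + 2 * (l * e) + 2 * K * e ^ 2) * e ^ 2) :
    l ^ 2 ≤ μ * d ^ 2 + (4 / μ + 4 + 2 / ℓ + 4 * K) * e ^ 6 + (2 / ℓ + 4 * K) := by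
  have habsorb : 2 * (l * e) * e ^ 2 ≤ l ^ 2 / 2 + 2 * e ^ 6 := by
    nlinarith [sq_nonneg (l - 2 * e ^ 3)]
  have hyoung : 4 * (e ^ 3 * d) ≤ 4 / μ * e ^ 6 + μ * d ^ 2 := by
    have : 4 / μ * e ^ 6 + μ * d ^ 2 - 4 * (e ^ 3 * d) = (2 * e ^ 3 - μ * d) ^ 2 / μ := by
      field_simp; ring
    nlinarith [div_nonneg (sq_nonneg (2 * e ^ 3 - μ * d)) hμ.le]
  have hquartic : e ^ 4 ≤ e ^ 6 + 1 := by
    nlinarith [mul_nonneg (sq_nonneg e) (sq_nonneg (e ^ 2 - 1)), sq_nonneg (e ^ 2 - 1 / 2)]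
  have hcoef : (2 / ℓ + 4 * K) * e ^ 4 ≤ (2 / ℓ + 4 * K) * (e ^ 6 + 1) :=
    mul_le_mul_of_nonneg_left hquartic (by positivity)
  linear_combination 2 * h + 2 * habsorb + hyoung + hcoef

theorem integral_abs_deriv_sq_le {ℓ K : ℝ} (hℓ : 0 < ℓ) {φ φ' ψ : ℝ → ℝ} (hφ : Continuous φ)
    (hφ' : Continuous φ') (hψ : Continuous ψ)
    (hbound : ∀ x, |φ' x| ≤ |ψ x| + φ x ^ 2 + K * |φ x|) :
    ∫ x in (0:ℝ)..ℓ, |2 * φ x * φ' x| ≤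
      2 * (√(∫ x in (0:ℝ)..ℓ, φ x ^ 2) * √(∫ x in (0:ℝ)..ℓ, ψ x ^ 2)) +
      2 * (√(∫ x in (0:ℝ)..ℓ, φ x ^ 4) * √(∫ x in (0:ℝ)..ℓ, φ x ^ 2)) +
      2 * K * ∫ x in (0:ℝ)..ℓ, φ x ^ 2 := by
  have hcs₁ := integral_mul_le_sqrt_mul_sqrt hℓ.le hφ.abs hψ.abs
  have hcs₂ := integral_mul_le_sqrt_mul_sqrt hℓ.le (F := fun x => φ x ^ 2) (by fun_prop) hφ.abs
  simp only [sq_abs, ← pow_mul, Nat.reduceMul] at hcs₁ hcs₂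
  calc ∫ x in (0:ℝ)..ℓ, |2 * φ x * φ' x|
      ≤ ∫ x in (0:ℝ)..ℓ, (2 * (|φ x| * |ψ x|) + 2 * (φ x ^ 2 * |φ x|) + 2 * K * φ x ^ 2) := by
        refine integral_mono_on hℓ.le (Continuous.intervalIntegrable (by fun_prop) _ _)
          (Continuous.intervalIntegrable (by fun_prop) _ _) fun x _ => ?_
        calc |2 * φ x * φ' x| = 2 * |φ x| * |φ' x| := by rw [abs_mul, abs_mul, abs_two]
          _ ≤ 2 * |φ x| * (|ψ x| + φ x ^ 2 + K * |φ x|) := by gcongr; exact hbound x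
          _ = _ := by rw [← sq_abs (φ x)]; ring
    _ = 2 * (∫ x in (0:ℝ)..ℓ, |φ x| * |ψ x|) + 2 * (∫ x in (0:ℝ)..ℓ, φ x ^ 2 * |φ x|) +
          2 * K * ∫ x in (0:ℝ)..ℓ, φ x ^ 2 := by
        rw [intervalIntegral.integral_add, intervalIntegral.integral_add,
          intervalIntegral.integral_const_mul, intervalIntegral.integral_const_mul,
          intervalIntegral.integral_const_mul]
        all_goals exact (by fun_prop : Continuous _).intervalIntegrable _ _
    _ ≤ _ := by linarith

theorem integral_pow_four_le_of_abs_deriv_le {ℓ K μ : ℝ} (hℓ : 0 < ℓ) (hK : 0 ≤ K) (hμ : 0 < μ)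
    {φ φ' ψ : ℝ → ℝ} (hφ : ∀ x, HasDerivAt φ (φ' x) x) (hφ' : Continuous φ')
    (hψ : Continuous ψ) (hper : Function.Periodic φ ℓ)
    (hbound : ∀ x, |φ' x| ≤ |ψ x| + φ x ^ 2 + K * |φ x|) :
    ∫ x in (0:ℝ)..ℓ, φ x ^ 4 ≤ μ * (∫ x in (0:ℝ)..ℓ, ψ x ^ 2) +
      (4 / μ + 4 + 2 / ℓ + 4 * K) * (∫ x in (0:ℝ)..ℓ, φ x ^ 2) ^ 3 + (2 / ℓ + 4 * K) := by
  have hφc : Continuous φ := continuous_iff_continuousAt.2 fun x => (hφ x).continuousAt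
  set E := ∫ x in (0:ℝ)..ℓ, φ x ^ 2
  set D := ∫ x in (0:ℝ)..ℓ, ψ x ^ 2
  set L := ∫ x in (0:ℝ)..ℓ, φ x ^ 4
  set I := ∫ x in (0:ℝ)..ℓ, |2 * φ x * φ' x|
  have hE : 0 ≤ E := integral_nonneg hℓ.le fun _ _ => sq_nonneg _
  have hD : 0 ≤ D := integral_nonneg hℓ.le fun _ _ => sq_nonneg _
  have hL : 0 ≤ L := integral_nonneg hℓ.le fun _ _ => by positivity
  have hsup : ∀ x, φ x ^ 2 ≤ E / ℓ + I := fun x =>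
    (hper.comp fun y => y ^ 2).le_integral_div_add_integral_abs_deriv (h := fun y => φ y ^ 2)
      hℓ (fun y => by simpa using (hφ y).fun_pow 2) (by fun_prop) x
  have hLE : L ≤ (E / ℓ + I) * E := calc
    L = ∫ x in (0:ℝ)..ℓ, φ x ^ 2 * φ x ^ 2 := by simp only [L, ← pow_add]
    _ ≤ ∫ x in (0:ℝ)..ℓ, (E / ℓ + I) * φ x ^ 2 :=
      integral_mono_on hℓ.le (Continuous.intervalIntegrable (by fun_prop) _ _)
        (Continuous.intervalIntegrable (by fun_prop) _ _) fun x _ =>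
        mul_le_mul_of_nonneg_right (hsup x) (sq_nonneg _)
    _ = (E / ℓ + I) * E := integral_const_mul _ _
  have hI : I ≤ 2 * (√E * √D) + 2 * (√L * √E) + 2 * K * E :=
    integral_abs_deriv_sq_le hℓ hφc hφ' hψ hbound
  have key := sq_le_add_of_sq_le_mul_sq hℓ hμ hK (l := √L) (e := √E) (d := √D)
  rw [Real.sq_sqrt hE, Real.sq_sqrt hD, Real.sq_sqrt hL,
    show √E ^ 6 = E ^ 3 by rw [show 6 = 2 * 3 by rfl, pow_mul, Real.sq_sqrt hE]] at key
  exact key (hLE.trans (mul_le_mul_of_nonneg_right (by linarith) hE))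

theorem abs_div_sub_mul_div_le {f g w w' K : ℝ} (hw : 0 < w) (h : |w'| ≤ |f| + K * w) :
    |(g - f / w * w') / w| ≤ |g / w| + (f / w) ^ 2 + K * |f / w| := by
  have hw'w : |w'| / w ≤ |f / w| + K := by
    rw [div_le_iff₀ hw, abs_div, abs_of_pos hw, add_mul, div_mul_cancel₀ _ hw.ne']
    exact h
  calc |(g - f / w * w') / w| = |g / w - f / w * (w' / w)| := by rw [sub_div, mul_div_assoc]
    _ ≤ |g / w| + |f / w| * (|w'| / w) := by
      refine (abs_sub _ _).trans_eq ?_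
      rw [abs_mul, abs_div w', abs_of_pos hw]
    _ ≤ |g / w| + |f / w| * (|f / w| + K) := by gcongr
    _ = |g / w| + (f / w) ^ 2 + K * |f / w| := by rw [← sq_abs (f / w)]; ring

theorem integral_pow_four_div_pow_four_le {ℓ K μ c : ℝ} (hℓ : 0 < ℓ) (hK : 0 ≤ K) (hμ : 0 < μ)
    (hc : 0 < c) {f g w w' : ℝ → ℝ} (hf : ∀ x, HasDerivAt f (g x) x)
    (hw : ∀ x, HasDerivAt w (w' x) x) (hg : Continuous g) (hw' : Continuous w')
    (hfper : Function.Periodic f ℓ) (hwper : Function.Periodic w ℓ) (hwc : ∀ x, c ≤ w x)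
    (hbound : ∀ x, |w' x| ≤ |f x| + K * w x) :
    ∫ x in (0:ℝ)..ℓ, f x ^ 4 / w x ^ 4 ≤ μ * (∫ x in (0:ℝ)..ℓ, g x ^ 2 / w x ^ 2) +
      (4 / μ + 4 + 2 / ℓ + 4 * K) / c ^ 6 * (∫ x in (0:ℝ)..ℓ, f x ^ 2) ^ 3 +
      (2 / ℓ + 4 * K) := by
  have hwpos : ∀ x, 0 < w x := fun x => hc.trans_le (hwc x)
  have hfc : Continuous f := continuous_iff_continuousAt.2 fun x => (hf x).continuousAt
  have hwc' : Continuous w := continuous_iff_continuousAt.2 fun x => (hw x).continuousAt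
  have hderiv : ∀ x, HasDerivAt (fun y => f y / w y) ((g x - f x / w x * w' x) / w x) x :=
    fun x => by
      have hx := (hwpos x).ne'
      refine ((hf x).div (hw x) hx).congr_deriv ?_
      field_simp
  have hw0 : ∀ x, w x ≠ 0 := fun x => (hwpos x).ne'
  have key := integral_pow_four_le_of_abs_deriv_le hℓ hK hμ hderiv
    (by fun_prop (disch := exact hw0)) (by fun_prop (disch := exact hw0))
    (fun x => by simp only [hfper x, hwper x]) fun x => abs_div_sub_mul_div_le (hwpos x) (hbound x)
  have hE : ∫ x in (0:ℝ)..ℓ, (f x / w x) ^ 2 ≤ (∫ x in (0:ℝ)..ℓ, f x ^ 2) / c ^ 2 := by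
    rw [← intervalIntegral.integral_div]
    refine integral_mono_on hℓ.le
      (Continuous.intervalIntegrable (by fun_prop (disch := exact hw0)) _ _)
      (Continuous.intervalIntegrable (by fun_prop) _ _) fun x _ => ?_
    rw [div_pow]
    exact div_le_div_of_nonneg_left (sq_nonneg _) (by positivity)
      (pow_le_pow_left₀ hc.le (hwc x) 2)
  simp only [div_pow] at key hE
  have hE3 : (∫ x in (0:ℝ)..ℓ, f x ^ 2 / w x ^ 2) ^ 3 ≤
      (∫ x in (0:ℝ)..ℓ, f x ^ 2) ^ 3 / c ^ 6 := by
    rw [show 6 = 2 * 3 by rfl, pow_mul, ← div_pow]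
    exact pow_le_pow_left₀ (integral_nonneg hℓ.le fun x _ => by positivity) hE 3
  calc _ ≤ _ := key
    _ ≤ _ := by rw [div_mul_eq_mul_div, mul_div_assoc]; gcongr

section Sfun

variable {κ₀ u : ℝ → ℝ}

theorem abs_deriv_le_Sfun (σ : ℝ) : |deriv u σ| ≤ Sfun κ₀ u σ :=
  Real.abs_le_sqrt (le_add_of_nonneg_right (sq_nonneg _))

theorem abs_one_sub_mul_le_Sfun (σ : ℝ) : |1 - u σ * κ₀ σ| ≤ Sfun κ₀ u σ :=
  Real.abs_le_sqrt (le_add_of_nonneg_left (sq_nonneg _))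

theorem Function.Periodic.Sfun {ℓ : ℝ} (hu : Function.Periodic u ℓ)
    (hκ₀ : Function.Periodic κ₀ ℓ) : Function.Periodic (Sfun κ₀ u) ℓ := fun σ => by
  simp only [_root_.Sfun, hu.deriv σ, hu σ, hκ₀ σ]

theorem hasDerivAt_Sfun {σ u₂ k : ℝ} (hu : HasDerivAt u (deriv u σ) σ)
    (hu' : HasDerivAt (deriv u) u₂ σ) (hκ₀ : HasDerivAt κ₀ k σ) (hS : 0 < Sfun κ₀ u σ) :
    HasDerivAt (Sfun κ₀ u) ((deriv u σ * u₂ -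
      (1 - u σ * κ₀ σ) * (deriv u σ * κ₀ σ + u σ * k)) / Sfun κ₀ u σ) σ := by
  have hQ := Real.sqrt_pos.1 hS
  refine (((hu'.fun_pow 2).fun_add
    (((hasDerivAt_const σ 1).fun_sub (hu.fun_mul hκ₀)).fun_pow 2)).sqrt hQ.ne').congr_deriv ?_
  unfold Sfun
  field_simp
  ring

theorem sub_mul_le_Sfun {σ δ₀ M : ℝ} (hu : |u σ| ≤ δ₀) (hκ₀ : |κ₀ σ| ≤ M) :
    1 - δ₀ * M ≤ Sfun κ₀ u σ := by
  have : |u σ * κ₀ σ| ≤ δ₀ * M := by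
    rw [abs_mul]
    exact mul_le_mul hu hκ₀ (abs_nonneg _) ((abs_nonneg _).trans hu)
  linarith [abs_le.1 this, le_abs_self (1 - u σ * κ₀ σ),
    abs_one_sub_mul_le_Sfun (κ₀ := κ₀) (u := u) σ]

theorem abs_mul_sub_mul_div_Sfun_le {σ p q : ℝ} (hS : 0 < Sfun κ₀ u σ) :
    |(deriv u σ * p - (1 - u σ * κ₀ σ) * q) / Sfun κ₀ u σ| ≤ |p| + |q| := by
  rw [abs_div, abs_of_pos hS, div_le_iff₀ hS]
  calc |deriv u σ * p - (1 - u σ * κ₀ σ) * q|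
      ≤ |deriv u σ| * |p| + |1 - u σ * κ₀ σ| * |q| := by
        rw [← abs_mul, ← abs_mul]; exact abs_sub _ _
    _ ≤ Sfun κ₀ u σ * |p| + Sfun κ₀ u σ * |q| := by
        gcongr
        exacts [abs_deriv_le_Sfun σ, abs_one_sub_mul_le_Sfun σ]
    _ = (|p| + |q|) * Sfun κ₀ u σ := by ring

theorem abs_deriv_Sfun_le {σ u₂ k δ₀ M M' c : ℝ} (hc : 0 < c) (hS : c ≤ Sfun κ₀ u σ)
    (hu : |u σ| ≤ δ₀) (hκ₀ : |κ₀ σ| ≤ M) (hk : |k| ≤ M') :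
    |(deriv u σ * u₂ - (1 - u σ * κ₀ σ) * (deriv u σ * κ₀ σ + u σ * k)) / Sfun κ₀ u σ| ≤
      |u₂| + (M + δ₀ * M' / c) * Sfun κ₀ u σ := by
  have hδ₀M' : 0 ≤ δ₀ * M' := mul_nonneg ((abs_nonneg _).trans hu) ((abs_nonneg _).trans hk)
  refine (abs_mul_sub_mul_div_Sfun_le (hc.trans_le hS)).trans (add_le_add le_rfl ?_)
  calc |deriv u σ * κ₀ σ + u σ * k| ≤ |deriv u σ| * M + δ₀ * M' := by
        refine (abs_add_le _ _).trans ?_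
        rw [abs_mul, abs_mul]
        gcongr
        exact (abs_nonneg _).trans hu
    _ ≤ Sfun κ₀ u σ * M + δ₀ * M' / c * Sfun κ₀ u σ := by
        refine add_le_add (mul_le_mul_of_nonneg_right (abs_deriv_le_Sfun σ)
          ((abs_nonneg _).trans hκ₀)) ?_
        rw [div_mul_eq_mul_div, le_div_iff₀ hc]
        exact mul_le_mul_of_nonneg_left hS hδ₀M'
    _ = (M + δ₀ * M' / c) * Sfun κ₀ u σ := by ring

theorem integral_iteratedDeriv_two_pow_four_div_Sfun_pow_four_le {ℓ μ δ₀ M M' c : ℝ}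
    (hℓ : 0 < ℓ) (hμ : 0 < μ) (hκ₀ : ContDiff ℝ 1 κ₀) (hκ₀per : Function.Periodic κ₀ ℓ)
    (hM : ∀ σ, |κ₀ σ| ≤ M) (hM' : ∀ σ, |deriv κ₀ σ| ≤ M') (hc : 0 < c)
    (hcM : c ≤ 1 - δ₀ * M) (hu : ContDiff ℝ 3 u) (huper : Function.Periodic u ℓ)
    (hub : ∀ σ, |u σ| ≤ δ₀) :
    ∫ σ in (0:ℝ)..ℓ, iteratedDeriv 2 u σ ^ 4 / Sfun κ₀ u σ ^ 4 ≤
      μ * (∫ σ in (0:ℝ)..ℓ, iteratedDeriv 3 u σ ^ 2 / Sfun κ₀ u σ ^ 2) +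
      (4 / μ + 4 + 2 / ℓ + 4 * (M + δ₀ * M' / c)) / c ^ 6 *
        (∫ σ in (0:ℝ)..ℓ, iteratedDeriv 2 u σ ^ 2) ^ 3 + (2 / ℓ + 4 * (M + δ₀ * M' / c)) := by
  have hK : 0 ≤ M + δ₀ * M' / c := by
    have := (abs_nonneg _).trans (hM 0)
    have := (abs_nonneg _).trans (hM' 0)
    have := (abs_nonneg _).trans (hub 0)
    positivity
  have hS : ∀ σ, c ≤ Sfun κ₀ u σ := fun σ => hcM.trans (sub_mul_le_Sfun (hub σ) (hM σ))
  have hSpos : ∀ σ, 0 < Sfun κ₀ u σ := fun σ => hc.trans_le (hS σ)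
  have hu₁ : ∀ σ, HasDerivAt u (deriv u σ) σ := by
    simpa using hu.hasDerivAt_iteratedDeriv (m := 0) (by norm_num)
  have hu₂ : ∀ σ, HasDerivAt (deriv u) (iteratedDeriv 2 u σ) σ := by
    simpa using hu.hasDerivAt_iteratedDeriv (m := 1) (by norm_num)
  have hκ₀' : ∀ σ, HasDerivAt κ₀ (deriv κ₀ σ) σ := fun σ =>
    (hκ₀.differentiable one_ne_zero σ).hasDerivAt
  have : Continuous u := hu.continuous
  have : Continuous κ₀ := hκ₀.continuous
  have : Continuous (deriv u) := hu.continuous_deriv (by norm_num)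
  have : Continuous (iteratedDeriv 2 u) := hu.continuous_iteratedDeriv 2 (by norm_num)
  have : Continuous (deriv κ₀) := hκ₀.continuous_deriv le_rfl
  have : Continuous (Sfun κ₀ u) := by unfold Sfun; fun_prop
  exact integral_pow_four_div_pow_four_le hℓ hK hμ hc (hu.hasDerivAt_iteratedDeriv (by norm_num))
    (fun σ => hasDerivAt_Sfun (hu₁ σ) (hu₂ σ) (hκ₀' σ) (hSpos σ))
    (hu.continuous_iteratedDeriv 3 le_rfl) (by fun_prop (disch := exact fun σ => (hSpos σ).ne'))
    (huper.iteratedDeriv 2) (huper.Sfun hκ₀per) hS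
    fun σ => abs_deriv_Sfun_le hc (hS σ) (hub σ) (hM σ) (hM' σ)

end Sfun

/-- interpolation-type inequality. For every μ > 0 there exist
constants C₂, C₃ ≥ 0 (depending only on μ, ℓ, δ₀, κ₀) such that for every C³,
ℓ-periodic u with |u| ≤ δ₀ one has
∫₀^ℓ u″⁴/S⁴ ≤ μ·∫₀^ℓ u‴²/S² + C₂·(∫₀^ℓ u″²)³ + C₃. -/
theorem stmt7 (ℓ : ℝ) (hℓ : 0 < ℓ)
    (κ₀ : ℝ → ℝ) (hκ₀ : ContDiff ℝ 1 κ₀) (hκ₀per : Function.Periodic κ₀ ℓ)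
    (δ₀ : ℝ) (hδ₀ : 0 < δ₀) (hsmall : ∀ σ : ℝ, δ₀ * |κ₀ σ| < 1) :
    ∀ μ : ℝ, 0 < μ →
      ∃ C₂ C₃ : ℝ, 0 ≤ C₂ ∧ 0 ≤ C₃ ∧
        ∀ u : ℝ → ℝ, ContDiff ℝ 3 u → Function.Periodic u ℓ →
          (∀ σ : ℝ, |u σ| ≤ δ₀) →
          (∫ σ in (0:ℝ)..ℓ, (iteratedDeriv 2 u σ) ^ 4 / (Sfun κ₀ u σ) ^ 4) ≤
            μ * (∫ σ in (0:ℝ)..ℓ,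
                  (iteratedDeriv 3 u σ) ^ 2 / (Sfun κ₀ u σ) ^ 2) +
            C₂ * (∫ σ in (0:ℝ)..ℓ, (iteratedDeriv 2 u σ) ^ 2) ^ 3 + C₃ := by
  intro μ hμ
  obtain ⟨_, ⟨σ₀, rfl⟩, hσ₀⟩ := ((hκ₀per.comp fun y => |y|).compact_of_continuous hℓ.ne'
    hκ₀.continuous.abs).exists_isGreatest (range_nonempty _)
  obtain ⟨M', hM'⟩ := (hκ₀per.deriv.isBounded_of_continuous hℓ.ne'
    (hκ₀.continuous_deriv le_rfl)).exists_norm_le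
  have hM'₀ : 0 ≤ M' := (norm_nonneg _).trans (hM' _ (mem_range_self 0))
  set c := 1 - δ₀ * |κ₀ σ₀|
  have hc : 0 < c := by linarith [hsmall σ₀]
  set K := |κ₀ σ₀| + δ₀ * M' / c
  refine ⟨(4 / μ + 4 + 2 / ℓ + 4 * K) / c ^ 6, 2 / ℓ + 4 * K, by positivity, by positivity,
    fun u hu huper hub => ?_⟩
  exact integral_iteratedDeriv_two_pow_four_div_Sfun_pow_four_le hℓ hμ hκ₀ hκ₀per
    (fun σ => hσ₀ (mem_range_self σ)) (fun σ => hM' _ (mem_range_self σ)) hc le_rfl hu huper hub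
end

section
/- There exists a constant R ≥ 0, depending only on ℓ, κ₀, δ₀ and Φ (and in particular independent of the solution and of its initial datum), such that for every T > 0 and every classical solution u of the interface equation on I × [0, T] with |u(σ, t)| ≤ δ₀ for all (σ, t), one has |u(σ, t)| ≤ sup_{σ′}|u(σ′, 0)| + R·t for all σ ∈ ℝ and t ∈ [0, T]. -/
/-! At a point where `u(·, t)` attains its spatial maximum, `u_σ = 0`, so `S = 1 - u κ₀`,
`V = u_t`, and the equation reduces to
`u_t - u_σσ / (1 - u κ₀)² = Φ(u_t) + κ₀ / (1 - u κ₀) - (∫ Φ(V) S + 2π) / L`.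
There `u_σσ ≤ 0`, `|Φ| ≤ B`, `1 - u κ₀ ≥ c := 1 - δ₀ sup |κ₀| > 0` and `L ≥ ℓ c`, whence
`u_t ≤ R := 2B + sup |κ₀| / c + 2π / (ℓ c)`; symmetrically `u_t ≥ -R` at a spatial minimum.
A maximum principle for functions periodic in space (maximise `u - (R + ε) t` over the compact
set `[0, ℓ] × [0, t]`) turns these into `|u(σ, t)| ≤ sup |u(·, 0)| + R t`. -/

open MeasureTheory Set intervalIntegral Real

/-- First spatial derivative u_σ. -/
noncomputable def uσ (u : ℝ → ℝ → ℝ) (σ t : ℝ) : ℝ := deriv (fun x => u x t) σ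

/-- Second spatial derivative u_σσ. -/
noncomputable def uσσ (u : ℝ → ℝ → ℝ) (σ t : ℝ) : ℝ :=
  iteratedDeriv 2 (fun x => u x t) σ

/-- Third spatial derivative u_σσσ. -/
noncomputable def uσσσ (u : ℝ → ℝ → ℝ) (σ t : ℝ) : ℝ :=
  iteratedDeriv 3 (fun x => u x t) σ

/-- Time derivative u_t. -/
noncomputable def ut (u : ℝ → ℝ → ℝ) (σ t : ℝ) : ℝ := deriv (fun s => u σ s) t

/-- Metric factor S = √(u_σ² + (1 − u·κ₀)²). -/
noncomputable def Sf (κ₀ : ℝ → ℝ) (u : ℝ → ℝ → ℝ) (σ t : ℝ) : ℝ :=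
  Real.sqrt ((uσ u σ t) ^ 2 + (1 - u σ t * κ₀ σ) ^ 2)

/-- Normal velocity V = ((1 − u·κ₀)/S)·u_t. -/
noncomputable def Vf (κ₀ : ℝ → ℝ) (u : ℝ → ℝ → ℝ) (σ t : ℝ) : ℝ :=
  ((1 - u σ t * κ₀ σ) / Sf κ₀ u σ t) * ut u σ t

/-- Curvature κ(u) = S⁻³·[(1 − u κ₀)·u_σσ + 2κ₀·u_σ² + κ₀′·u·u_σ + κ₀·(1 − u κ₀)²]. -/
noncomputable def curv (κ₀ : ℝ → ℝ) (u : ℝ → ℝ → ℝ) (σ t : ℝ) : ℝ :=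
  ((1 - u σ t * κ₀ σ) * uσσ u σ t + 2 * κ₀ σ * (uσ u σ t) ^ 2
    + deriv κ₀ σ * u σ t * uσ u σ t + κ₀ σ * (1 - u σ t * κ₀ σ) ^ 2) /
    (Sf κ₀ u σ t) ^ 3

/-- Total length L[u](t) = ∫₀^ℓ S dσ. -/
noncomputable def Lf (ℓ : ℝ) (κ₀ : ℝ → ℝ) (u : ℝ → ℝ → ℝ) (t : ℝ) : ℝ :=
  ∫ σ in (0:ℝ)..ℓ, Sf κ₀ u σ t

/-- A classical solution of the interface evolution equation on I × [0, T]: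
u is ℓ-periodic in σ, has continuous partial derivatives u_t, u_σ, u_σσ,
and satisfies the equation
u_t − (S/(1 − u κ₀))·Φ(V) = (S/(1 − u κ₀))·κ(u)
  − (S/((1 − u κ₀)·L[u]))·(∫₀^ℓ Φ(V)·S dσ + 2π) pointwise. -/
structure IsClassicalSol (ℓ : ℝ) (κ₀ : ℝ → ℝ) (Φ : ℝ → ℝ) (T : ℝ)
    (u : ℝ → ℝ → ℝ) : Prop where
  periodic : ∀ t ∈ Icc (0:ℝ) T, Function.Periodic (fun σ => u σ t) ℓ
  cont : Continuous fun p : ℝ × ℝ => u p.1 p.2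
  smooth_σ : ∀ t ∈ Icc (0:ℝ) T, ContDiff ℝ 2 (fun σ => u σ t)
  diff_t : ∀ σ : ℝ, ∀ t ∈ Icc (0:ℝ) T, DifferentiableAt ℝ (fun s => u σ s) t
  cont_ut : ContinuousOn (fun p : ℝ × ℝ => ut u p.1 p.2) (univ ×ˢ Icc (0:ℝ) T)
  cont_uσ : ContinuousOn (fun p : ℝ × ℝ => uσ u p.1 p.2) (univ ×ˢ Icc (0:ℝ) T)
  cont_uσσ : ContinuousOn (fun p : ℝ × ℝ => uσσ u p.1 p.2) (univ ×ˢ Icc (0:ℝ) T)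
  eqn : ∀ σ : ℝ, ∀ t ∈ Icc (0:ℝ) T,
    ut u σ t - (Sf κ₀ u σ t / (1 - u σ t * κ₀ σ)) * Φ (Vf κ₀ u σ t)
      = (Sf κ₀ u σ t / (1 - u σ t * κ₀ σ)) * curv κ₀ u σ t
        - (Sf κ₀ u σ t / ((1 - u σ t * κ₀ σ) * Lf ℓ κ₀ u t))
          * ((∫ σ' in (0:ℝ)..ℓ, Φ (Vf κ₀ u σ' t) * Sf κ₀ u σ' t) + 2 * π)

open Filter Topology

-- If `f''(x) > 0`, the second-derivative test makes `x` a local minimum as well, so `f` is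
-- locally constant near `x` and `f''(x) = 0`.
theorem IsLocalMax.deriv_deriv_nonpos {f : ℝ → ℝ} {x : ℝ} (h : IsLocalMax f x)
    (hc : ContinuousAt f x) : deriv (deriv f) x ≤ 0 := by
  by_contra! hpos
  have hmin := isLocalMin_of_deriv_deriv_pos hpos h.deriv_eq_zero hc
  have hconst : f =ᶠ[𝓝 x] fun _ => f x :=
    (Filter.Eventually.and h hmin).mono fun _ hy => le_antisymm hy.1 hy.2
  have hzero : deriv (deriv f) x = 0 := by simp [hconst.deriv.deriv_eq]
  exact hpos.ne' hzero

theorem IsLocalMin.deriv_deriv_nonneg {f : ℝ → ℝ} {x : ℝ} (h : IsLocalMin f x)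
    (hc : ContinuousAt f x) : 0 ≤ deriv (deriv f) x := by
  by_contra! hneg
  have hmax := isLocalMax_of_deriv_deriv_neg hneg h.deriv_eq_zero hc
  have hconst : f =ᶠ[𝓝 x] fun _ => f x :=
    (Filter.Eventually.and hmax h).mono fun _ hy => le_antisymm hy.1 hy.2
  have hzero : deriv (deriv f) x = 0 := by simp [hconst.deriv.deriv_eq]
  exact hneg.ne hzero

theorem IsMaxOn.nonneg_of_hasDerivAt_of_Icc {f : ℝ → ℝ} {f' a b : ℝ} (hab : a < b)
    (hf : HasDerivAt f f' b) (h : IsMaxOn f (Icc a b) b) : 0 ≤ f' := by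
  have hcone : a - b ∈ posTangentConeAt (Icc a b) b :=
    sub_mem_posTangentConeAt_of_segment_subset
      ((segment_symm ℝ b a).subset.trans (segment_subset_Icc hab.le))
  have := h.localize.hasFDerivWithinAt_nonpos hf.hasFDerivAt.hasFDerivWithinAt hcone
  rw [ContinuousLinearMap.toSpanSingleton_apply, smul_eq_mul] at this
  exact nonneg_of_mul_nonpos_right this (sub_neg.mpr hab)

theorem Function.Periodic.exists_isMaxOn {f : ℝ → ℝ} {c : ℝ} (hp : Function.Periodic f c)
    (hc : c ≠ 0) (hf : Continuous f) : ∃ x, IsMaxOn f univ x := by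
  obtain ⟨_, ⟨⟨x, rfl⟩, hx⟩⟩ :=
    (hp.compact_of_continuous hc hf).exists_isGreatest (range_nonempty f)
  exact ⟨x, fun y _ => hx ⟨y, rfl⟩⟩

section MaximumPrinciple

variable {v : ℝ → ℝ → ℝ} {ℓ T R M : ℝ}

theorem le_add_mul_of_deriv_le_of_lt (hℓ : 0 < ℓ)
    (hper : ∀ t ∈ Icc 0 T, Function.Periodic (v · t) ℓ)
    (hcont : Continuous fun p : ℝ × ℝ => v p.1 p.2)
    (hdt : ∀ σ, ∀ t ∈ Icc 0 T, DifferentiableAt ℝ (v σ ·) t)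
    (hmax : ∀ σ, ∀ t ∈ Ioc 0 T, IsMaxOn (v · t) univ σ → deriv (v σ ·) t ≤ R)
    (hM : ∀ σ, v σ 0 ≤ M) {R' : ℝ} (hR : R < R') {σ t : ℝ} (ht : t ∈ Icc 0 T) :
    v σ t ≤ M + R' * t := by
  have hg : Continuous fun p : ℝ × ℝ => v p.1 p.2 - R' * p.2 :=
    hcont.sub (continuous_const.mul continuous_snd)
  obtain ⟨⟨σ₁, t₁⟩, ⟨-, ht₁⟩, hmax₁⟩ :=
    (isCompact_Icc.prod isCompact_Icc).exists_isMaxOn (s := Icc 0 ℓ ×ˢ Icc 0 t)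
      ⟨(0, 0), ⟨le_rfl, hℓ.le⟩, ⟨le_rfl, ht.1⟩⟩ hg.continuousOn
  have ht₁T : t₁ ∈ Icc 0 T := ⟨ht₁.1, ht₁.2.trans ht.2⟩
  have hg_le : ∀ x, ∀ s ∈ Icc 0 t, s ∈ Icc 0 T → v x s - R' * s ≤ v σ₁ t₁ - R' * t₁ := by
    intro x s hs hsT
    obtain ⟨y, hy, hxy⟩ := (hper s hsT).exists_mem_Ico₀ hℓ x
    rw [hxy]
    exact hmax₁ (show (y, s) ∈ Icc 0 ℓ ×ˢ Icc 0 t from ⟨Ico_subset_Icc_self hy, hs⟩)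
  have hσt := hg_le σ t ⟨ht.1, le_rfl⟩ ht
  rcases ht₁.1.eq_or_lt with rfl | ht₁pos
  · linarith [hM σ₁]
  · exfalso
    have hspace : IsMaxOn (v · t₁) univ σ₁ := fun x _ => by
      simpa using hg_le x t₁ ht₁ ht₁T
    have htime : IsMaxOn (fun s => v σ₁ s - R' * s) (Icc 0 t₁) t₁ := fun s hs => by
      simpa using hg_le σ₁ s ⟨hs.1, hs.2.trans ht₁.2⟩ ⟨hs.1, hs.2.trans ht₁T.2⟩
    have hd := htime.nonneg_of_hasDerivAt_of_Icc ht₁pos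
      ((hdt σ₁ t₁ ht₁T).hasDerivAt.sub ((hasDerivAt_id' t₁).const_mul R'))
    linarith [hmax σ₁ t₁ ⟨ht₁pos, ht₁T.2⟩ hspace]

theorem le_add_mul_of_deriv_le (hℓ : 0 < ℓ)
    (hper : ∀ t ∈ Icc 0 T, Function.Periodic (v · t) ℓ)
    (hcont : Continuous fun p : ℝ × ℝ => v p.1 p.2)
    (hdt : ∀ σ, ∀ t ∈ Icc 0 T, DifferentiableAt ℝ (v σ ·) t)
    (hmax : ∀ σ, ∀ t ∈ Ioc 0 T, IsMaxOn (v · t) univ σ → deriv (v σ ·) t ≤ R)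
    (hM : ∀ σ, v σ 0 ≤ M) {σ t : ℝ} (ht : t ∈ Icc 0 T) :
    v σ t ≤ M + R * t := by
  rcases ht.1.eq_or_lt with rfl | htpos
  · simpa using hM σ
  refine le_of_forall_pos_le_add fun η hη => ?_
  calc v σ t ≤ M + (R + η / t) * t :=
        le_add_mul_of_deriv_le_of_lt hℓ hper hcont hdt hmax hM
          (lt_add_of_pos_right R (div_pos hη htpos)) ht
    _ = M + R * t + η := by field_simp; ring

theorem abs_le_add_mul_of_deriv_bounds (hℓ : 0 < ℓ)
    (hper : ∀ t ∈ Icc 0 T, Function.Periodic (v · t) ℓ)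
    (hcont : Continuous fun p : ℝ × ℝ => v p.1 p.2)
    (hdt : ∀ σ, ∀ t ∈ Icc 0 T, DifferentiableAt ℝ (v σ ·) t)
    (hmax : ∀ σ, ∀ t ∈ Ioc 0 T, IsMaxOn (v · t) univ σ → deriv (v σ ·) t ≤ R)
    (hmin : ∀ σ, ∀ t ∈ Ioc 0 T, IsMinOn (v · t) univ σ → -R ≤ deriv (v σ ·) t)
    (hM : ∀ σ, |v σ 0| ≤ M) {σ t : ℝ} (ht : t ∈ Icc 0 T) :
    |v σ t| ≤ M + R * t := by
  have hupper : v σ t ≤ M + R * t := le_add_mul_of_deriv_le hℓ hper hcont hdt hmax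
    (fun σ => (le_abs_self _).trans (hM σ)) ht
  have hlower : -v σ t ≤ M + R * t := le_add_mul_of_deriv_le (v := fun σ t => -v σ t) hℓ
    (fun t ht x => congrArg Neg.neg (hper t ht x)) hcont.neg (fun σ t ht => (hdt σ t ht).neg)
    (fun σ t ht h => by rw [deriv.fun_neg]; linarith [hmin σ t ht (by simpa using h.neg)])
    (fun σ => (neg_le_abs _).trans (hM σ)) ht
  exact abs_le.mpr ⟨by linarith, hupper⟩

end MaximumPrinciple

theorem one_sub_mul_le_one_sub_mul_of_abs_le {a k δ K : ℝ} (ha : |a| ≤ δ) (hk : |k| ≤ K) :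
    1 - δ * K ≤ 1 - a * k := by
  have : a * k ≤ δ * K := calc
    a * k ≤ |a| * |k| := (le_abs_self _).trans (abs_mul a k).le
    _ ≤ δ * K := mul_le_mul ha hk (abs_nonneg k) ((abs_nonneg a).trans ha)
  linarith

section Interface

variable {ℓ T B K c : ℝ} {κ₀ Φ : ℝ → ℝ} {u : ℝ → ℝ → ℝ} {σ t : ℝ}

theorem Sf_nonneg : 0 ≤ Sf κ₀ u σ t := Real.sqrt_nonneg _

theorem one_sub_mul_le_Sf : 1 - u σ t * κ₀ σ ≤ Sf κ₀ u σ t :=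
  (le_abs_self _).trans (Real.abs_le_sqrt (le_add_of_nonneg_left (sq_nonneg _)))

theorem Sf_of_uσ_eq_zero (h0 : uσ u σ t = 0) (ha : 0 ≤ 1 - u σ t * κ₀ σ) :
    Sf κ₀ u σ t = 1 - u σ t * κ₀ σ := by
  rw [Sf, h0, zero_pow two_ne_zero, zero_add, Real.sqrt_sq ha]

theorem Vf_of_uσ_eq_zero (h0 : uσ u σ t = 0) (ha : 0 < 1 - u σ t * κ₀ σ) :
    Vf κ₀ u σ t = ut u σ t := by
  rw [Vf, Sf_of_uσ_eq_zero h0 ha.le, div_self ha.ne', one_mul]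

theorem curv_of_uσ_eq_zero (h0 : uσ u σ t = 0) (ha : 0 < 1 - u σ t * κ₀ σ) :
    curv κ₀ u σ t
      = uσσ u σ t / (1 - u σ t * κ₀ σ) ^ 2 + κ₀ σ / (1 - u σ t * κ₀ σ) := by
  rw [curv, Sf_of_uσ_eq_zero h0 ha.le, h0]
  field_simp
  ring

theorem mul_le_Lf (hℓ : 0 ≤ ℓ) (hS : IntervalIntegrable (Sf κ₀ u · t) volume 0 ℓ)
    (hc : ∀ σ, c ≤ Sf κ₀ u σ t) : ℓ * c ≤ Lf ℓ κ₀ u t := by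
  simpa [Lf, mul_comm] using integral_mono_on hℓ intervalIntegrable_const hS fun σ _ => hc σ

theorem abs_integral_Φ_Vf_mul_Sf_le (hℓ : 0 ≤ ℓ) (hB : ∀ x, |Φ x| ≤ B)
    (hS : IntervalIntegrable (Sf κ₀ u · t) volume 0 ℓ) :
    |∫ σ in (0:ℝ)..ℓ, Φ (Vf κ₀ u σ t) * Sf κ₀ u σ t| ≤ B * Lf ℓ κ₀ u t := by
  rw [Lf, ← intervalIntegral.integral_const_mul, ← Real.norm_eq_abs]
  refine norm_integral_le_of_norm_le hℓ (ae_of_all _ fun σ _ => ?_) (hS.const_mul B)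
  rw [Real.norm_eq_abs, abs_mul, abs_of_nonneg Sf_nonneg]
  exact mul_le_mul_of_nonneg_right (hB _) Sf_nonneg

theorem abs_nonlocal_div_Lf_le (hℓ : 0 < ℓ) (hc : 0 < c) (hB : ∀ x, |Φ x| ≤ B)
    (hS : IntervalIntegrable (Sf κ₀ u · t) volume 0 ℓ) (hcS : ∀ σ, c ≤ Sf κ₀ u σ t) :
    |((∫ σ in (0:ℝ)..ℓ, Φ (Vf κ₀ u σ t) * Sf κ₀ u σ t) + 2 * π) / Lf ℓ κ₀ u t|
      ≤ B + 2 * π / (ℓ * c) := by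
  have hL := mul_le_Lf hℓ.le hS hcS
  have hLpos : 0 < Lf ℓ κ₀ u t := (mul_pos hℓ hc).trans_le hL
  have hπ : 2 * π ≤ 2 * π / (ℓ * c) * Lf ℓ κ₀ u t := by
    rw [div_mul_eq_mul_div, le_div_iff₀ (mul_pos hℓ hc)]
    exact mul_le_mul_of_nonneg_left hL (by positivity)
  rw [abs_div, abs_of_pos hLpos, div_le_iff₀ hLpos]
  calc _ ≤ |∫ σ in (0:ℝ)..ℓ, Φ (Vf κ₀ u σ t) * Sf κ₀ u σ t| + 2 * π := by
        simpa [abs_of_pos Real.pi_pos] using abs_add_le _ (2 * π)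
    _ ≤ B * Lf ℓ κ₀ u t + 2 * π / (ℓ * c) * Lf ℓ κ₀ u t := by
        gcongr
        exact abs_integral_Φ_Vf_mul_Sf_le hℓ.le hB hS
    _ = _ := by ring

theorem IsClassicalSol.continuous_slice (hsol : IsClassicalSol ℓ κ₀ Φ T u) :
    Continuous (u · t) :=
  hsol.cont.comp (continuous_id.prodMk continuous_const)

theorem IsClassicalSol.continuous_Sf (hsol : IsClassicalSol ℓ κ₀ Φ T u)
    (hκ₀ : Continuous κ₀) (ht : t ∈ Icc 0 T) : Continuous (Sf κ₀ u · t) := by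
  have huσ : Continuous (uσ u · t) :=
    hsol.cont_uσ.comp_continuous (continuous_id.prodMk continuous_const)
      fun _ => ⟨mem_univ _, ht⟩
  exact ((huσ.pow 2).add ((continuous_const.sub (hsol.continuous_slice.mul hκ₀)).pow 2)).sqrt

theorem IsClassicalSol.ut_sub_eq_of_uσ_eq_zero (hsol : IsClassicalSol ℓ κ₀ Φ T u)
    (ht : t ∈ Icc 0 T) (h0 : uσ u σ t = 0) (ha : 0 < 1 - u σ t * κ₀ σ)
    (hL : Lf ℓ κ₀ u t ≠ 0) :
    ut u σ t - uσσ u σ t / (1 - u σ t * κ₀ σ) ^ 2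
      = Φ (ut u σ t) + κ₀ σ / (1 - u σ t * κ₀ σ)
        - ((∫ σ' in (0:ℝ)..ℓ, Φ (Vf κ₀ u σ' t) * Sf κ₀ u σ' t) + 2 * π) / Lf ℓ κ₀ u t := by
  have heqn := hsol.eqn σ t ht
  rw [Sf_of_uσ_eq_zero h0 ha.le, Vf_of_uσ_eq_zero h0 ha, curv_of_uσ_eq_zero h0 ha] at heqn
  field_simp at heqn ⊢
  linarith

theorem IsClassicalSol.abs_ut_sub_le (hsol : IsClassicalSol ℓ κ₀ Φ T u) (hℓ : 0 < ℓ)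
    (hκ₀ : Continuous κ₀) (hB : ∀ x, |Φ x| ≤ B) (hK : ∀ σ, |κ₀ σ| ≤ K) (hc : 0 < c)
    (hcu : ∀ σ, c ≤ 1 - u σ t * κ₀ σ) (ht : t ∈ Icc 0 T)
    (h0 : uσ u σ t = 0) :
    |ut u σ t - uσσ u σ t / (1 - u σ t * κ₀ σ) ^ 2| ≤ 2 * B + K / c + 2 * π / (ℓ * c) := by
  have ha : 0 < 1 - u σ t * κ₀ σ := hc.trans_le (hcu σ)
  have hS := (hsol.continuous_Sf hκ₀ ht).intervalIntegrable (μ := volume) 0 ℓ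
  have hcS : ∀ σ, c ≤ Sf κ₀ u σ t := fun σ => (hcu σ).trans one_sub_mul_le_Sf
  have hLpos : 0 < Lf ℓ κ₀ u t := (mul_pos hℓ hc).trans_le (mul_le_Lf hℓ.le hS hcS)
  have hcurv : |κ₀ σ / (1 - u σ t * κ₀ σ)| ≤ K / c := by
    rw [abs_div, abs_of_pos ha]
    exact div_le_div₀ ((abs_nonneg _).trans (hK σ)) (hK σ) hc (hcu σ)
  rw [hsol.ut_sub_eq_of_uσ_eq_zero ht h0 ha hLpos.ne']
  calc _ ≤ |Φ (ut u σ t)| + |κ₀ σ / (1 - u σ t * κ₀ σ)|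
        + |((∫ σ' in (0:ℝ)..ℓ, Φ (Vf κ₀ u σ' t) * Sf κ₀ u σ' t) + 2 * π) / Lf ℓ κ₀ u t| :=
        (abs_sub _ _).trans (add_le_add (abs_add_le _ _) le_rfl)
    _ ≤ B + K / c + (B + 2 * π / (ℓ * c)) := by
        gcongr
        exacts [hB _, abs_nonlocal_div_Lf_le hℓ hc hB hS hcS]
    _ = _ := by ring

theorem IsClassicalSol.ut_le_of_isMaxOn (hsol : IsClassicalSol ℓ κ₀ Φ T u) (hℓ : 0 < ℓ)
    (hκ₀ : Continuous κ₀) (hB : ∀ x, |Φ x| ≤ B) (hK : ∀ σ, |κ₀ σ| ≤ K) (hc : 0 < c)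
    (hcu : ∀ σ, c ≤ 1 - u σ t * κ₀ σ) (ht : t ∈ Icc 0 T)
    (h : IsMaxOn (u · t) univ σ) :
    ut u σ t ≤ 2 * B + K / c + 2 * π / (ℓ * c) := by
  have hloc := h.isLocalMax univ_mem
  have h2 : uσσ u σ t ≤ 0 := by
    rw [uσσ, iteratedDeriv_succ, iteratedDeriv_one]
    exact hloc.deriv_deriv_nonpos hsol.continuous_slice.continuousAt
  have hbound := (abs_le.mp (hsol.abs_ut_sub_le hℓ hκ₀ hB hK hc hcu ht hloc.deriv_eq_zero)).2
  have := div_nonpos_of_nonpos_of_nonneg h2 (sq_nonneg (1 - u σ t * κ₀ σ))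
  linarith

theorem IsClassicalSol.neg_le_ut_of_isMinOn (hsol : IsClassicalSol ℓ κ₀ Φ T u) (hℓ : 0 < ℓ)
    (hκ₀ : Continuous κ₀) (hB : ∀ x, |Φ x| ≤ B) (hK : ∀ σ, |κ₀ σ| ≤ K) (hc : 0 < c)
    (hcu : ∀ σ, c ≤ 1 - u σ t * κ₀ σ) (ht : t ∈ Icc 0 T)
    (h : IsMinOn (u · t) univ σ) :
    -(2 * B + K / c + 2 * π / (ℓ * c)) ≤ ut u σ t := by
  have hloc := h.isLocalMin univ_mem
  have h2 : 0 ≤ uσσ u σ t := by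
    rw [uσσ, iteratedDeriv_succ, iteratedDeriv_one]
    exact hloc.deriv_deriv_nonneg hsol.continuous_slice.continuousAt
  have hbound := (abs_le.mp (hsol.abs_ut_sub_le hℓ hκ₀ hB hK hc hcu ht hloc.deriv_eq_zero)).1
  have := div_nonneg h2 (sq_nonneg (1 - u σ t * κ₀ σ))
  linarith

end Interface

theorem stmt8_general (ℓ δ₀ : ℝ) (κ₀ Φ : ℝ → ℝ)
    (hℓ : 0 < ℓ) (hκ₀ : ContDiff ℝ 1 κ₀) (hκ₀per : Function.Periodic κ₀ ℓ)
    (hsmall : ∀ σ : ℝ, δ₀ * |κ₀ σ| < 1)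
    (hΦbd : ∃ B : ℝ, ∀ x : ℝ, |Φ x| ≤ B) :
    ∃ R : ℝ, 0 ≤ R ∧
      ∀ T : ℝ, 0 < T → ∀ u : ℝ → ℝ → ℝ,
        IsClassicalSol ℓ κ₀ Φ T u →
        (∀ σ : ℝ, ∀ t ∈ Icc (0:ℝ) T, |u σ t| ≤ δ₀) →
        ∀ σ : ℝ, ∀ t ∈ Icc (0:ℝ) T,
          |u σ t| ≤ (⨆ σ' : ℝ, |u σ' 0|) + R * t := by
  obtain ⟨B, hB⟩ := hΦbd
  obtain ⟨σmax, hσmax⟩ := (hκ₀per.comp abs).exists_isMaxOn hℓ.ne' hκ₀.continuous.abs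
  set K := |κ₀ σmax|
  have hK : ∀ σ, |κ₀ σ| ≤ K := fun σ => hσmax (mem_univ σ)
  have hc : 0 < 1 - δ₀ * K := sub_pos.mpr (hsmall σmax)
  have hB0 : 0 ≤ B := (abs_nonneg _).trans (hB 0)
  refine ⟨2 * B + K / (1 - δ₀ * K) + 2 * π / (ℓ * (1 - δ₀ * K)), by positivity, ?_⟩
  intro T hT u hsol hbd σ t ht
  have hcu : ∀ t ∈ Icc 0 T, ∀ σ, 1 - δ₀ * K ≤ 1 - u σ t * κ₀ σ := fun t ht σ =>
    one_sub_mul_le_one_sub_mul_of_abs_le (hbd σ t ht) (hK σ)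
  have hbdd : BddAbove (range fun σ => |u σ 0|) :=
    ⟨δ₀, by rintro _ ⟨σ, rfl⟩; exact hbd σ 0 ⟨le_rfl, hT.le⟩⟩
  exact abs_le_add_mul_of_deriv_bounds hℓ hsol.periodic hsol.cont hsol.diff_t
    (fun σ t ht h => hsol.ut_le_of_isMaxOn hℓ hκ₀.continuous hB hK hc
      (hcu t (Ioc_subset_Icc_self ht)) (Ioc_subset_Icc_self ht) h)
    (fun σ t ht h => hsol.neg_le_ut_of_isMinOn hℓ hκ₀.continuous hB hK hc
      (hcu t (Ioc_subset_Icc_self ht)) (Ioc_subset_Icc_self ht) h)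
    (fun σ => le_ciSup hbdd σ) ht

/-- L∞ growth bound via maximum principle. There exists R ≥ 0
depending only on the fixed data ℓ, κ₀, δ₀, Φ such that every classical
solution u with |u| ≤ δ₀ on I × [0, T] satisfies
|u(σ,t)| ≤ sup_{σ′}|u(σ′,0)| + R·t. -/
theorem stmt8 (ℓ δ₀ J : ℝ) (κ₀ Φ : ℝ → ℝ)
    (hℓ : 0 < ℓ) (hκ₀ : ContDiff ℝ 1 κ₀) (hκ₀per : Function.Periodic κ₀ ℓ)
    (hδ₀ : 0 < δ₀) (hsmall : ∀ σ : ℝ, δ₀ * |κ₀ σ| < 1)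
    (hJ0 : 0 ≤ J) (hJ1 : J < 1)
    (hΦlip : ∀ a b : ℝ, |Φ a - Φ b| ≤ J * |a - b|)
    (hΦbd : ∃ B : ℝ, ∀ x : ℝ, |Φ x| ≤ B) :
    ∃ R : ℝ, 0 ≤ R ∧
      ∀ T : ℝ, 0 < T → ∀ u : ℝ → ℝ → ℝ,
        IsClassicalSol ℓ κ₀ Φ T u →
        (∀ σ : ℝ, ∀ t ∈ Icc (0:ℝ) T, |u σ t| ≤ δ₀) →
        ∀ σ : ℝ, ∀ t ∈ Icc (0:ℝ) T,
          |u σ t| ≤ (⨆ σ' : ℝ, |u σ' 0|) + R * t :=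
  stmt8_general ℓ δ₀ κ₀ Φ hℓ hκ₀ hκ₀per hsmall hΦbd
end
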